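/- arXiv:2605.06017 — 5 statements merged into one kernel-verified Lean document; each statement's English description precedes it below -/
import Mathlib

section
/- Let X = (X_1,…,X_N) be generated by a sub-critical causal tree with contraction parameter α, maximum out-degree D ≥ 1, and αD < 1. Let S_N = Σ_{i=1}^N f_i(X_i) where each f_i : 𝒜 → ℝ has oscillation at most 1 (so that S_N has sensitivity vector 1_N = (1,…,1)). Then for every t > 0: ℙ(|S_N − 𝔼[S_N]| ≥ t) ≤ 2·exp(−2t²(1 − αD)² / N). -/
open Finset

noncomputable section

/-- Total variation distance between two probability mass functions on a finite type. -/
def dTV {A : Type*} [Fintype A] (μ ν : A → ℝ) : ℝ := (∑ a, |μ a - ν a|) / 2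

/-- `p` is a family of causal transition kernels: `p j x` is the conditional distribution of the
`j`-th coordinate given the history `x`, and it only depends on the coordinates `i < j`. -/
def IsCausalKernel {N : ℕ} {A : Type*} [Fintype A]
    (p : Fin N → (Fin N → A) → A → ℝ) : Prop :=
  (∀ j x a, 0 ≤ p j x a) ∧ (∀ j x, ∑ a, p j x a = 1) ∧
    (∀ j x y, (∀ i, i < j → x i = y i) → p j x = p j y)

/-- The joint law on `A^N` induced by the chain rule `ℙ(x) = ∏_j p_j(x_j | x_{1:j-1})`. -/
def jointLaw {N : ℕ} {A : Type*} [Fintype A]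
    (p : Fin N → (Fin N → A) → A → ℝ) : (Fin N → A) → ℝ :=
  fun x => ∏ j, p j x (x j)

/-- Expectation of `f` under the (finitely supported) law `P`. -/
def expVal {N : ℕ} {A : Type*} [Fintype A] (P f : (Fin N → A) → ℝ) : ℝ := ∑ x, P x * f x

/-- The causal interdependence matrix: `H i j` is the maximal total-variation shift of the
kernel at step `j` caused by modifying coordinate `i` of the history (all other coordinates
before `j` held fixed); it vanishes for `i ≥ j`. -/
def Hmat {N : ℕ} {A : Type*} [Fintype A]
    (p : Fin N → (Fin N → A) → A → ℝ) : Matrix (Fin N) (Fin N) ℝ := fun i j =>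
  if i < j then
    ⨆ q : {q : (Fin N → A) × (Fin N → A) // ∀ m, m < j → m ≠ i → q.1 m = q.2 m},
      dTV (p j q.1.1) (p j q.1.2)
  else 0

/-- The causal causalResolvent `Γ = (I - H)⁻¹`. -/
def causalResolvent {N : ℕ} (H : Matrix (Fin N) (Fin N) ℝ) : Matrix (Fin N) (Fin N) ℝ :=
  (1 - H)⁻¹

/-- `f` admits the (nonnegative) sensitivity vector `c`. -/
def HasSensitivity {N : ℕ} {A : Type*} [DecidableEq A] [Fintype A]
    (f : (Fin N → A) → ℝ) (c : Fin N → ℝ) : Prop :=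
  (∀ j, 0 ≤ c j) ∧ ∀ x y, |f x - f y| ≤ ∑ j, if x j ≠ y j then c j else 0

/-- The kernel family generated by a causal tree: roots are drawn from `ρ j`, and every
non-root node `j` with parent `π j = some i` is drawn from `P j (x i)`. -/
def treeKernel {N : ℕ} {A : Type*} (π : Fin N → Option (Fin N))
    (ρ : Fin N → A → ℝ) (P : Fin N → A → A → ℝ) :
    Fin N → (Fin N → A) → A → ℝ :=
  fun j x =>
    match π j with
    | none => ρ j
    | some i => P j (x i)

set_option linter.unusedSectionVars false
set_option linter.unnecessarySimpa false


private lemma expAux_pos (p : ℝ) (hp0 : 0 ≤ p) (hp1 : p ≤ 1) (h : ℝ) :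
    0 < 1 - p + p * Real.exp h := by
  rcases eq_or_lt_of_le hp0 with h0 | h0
  · simp [← h0]
  · nlinarith [Real.exp_pos h]

private lemma hoeffding_core (p : ℝ) (hp0 : 0 ≤ p) (hp1 : p ≤ 1) (h : ℝ) (hh : 0 ≤ h) :
    Real.log (1 - p + p * Real.exp h) ≤ h ^ 2 / 8 + p * h := by
  set D : ℝ → ℝ := fun x => 1 - p + p * Real.exp x with hD
  have hDpos : ∀ x, 0 < D x := fun x => expAux_pos p hp0 hp1 x
  set G : ℝ → ℝ := fun x => x / 4 + p - p * Real.exp x / D x with hG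
  set F : ℝ → ℝ := fun x => x ^ 2 / 8 + p * x - Real.log (D x) with hF
  have hDd : ∀ x, HasDerivAt D (p * Real.exp x) x := fun x =>
    (((Real.hasDerivAt_exp x).const_mul p).const_add (1 - p))
  have hGd : ∀ x, HasDerivAt G
      (1/4 - (p * Real.exp x * D x - p * Real.exp x * (p * Real.exp x)) / (D x) ^ 2) x := by
    intro x
    have h1 : HasDerivAt (fun x : ℝ => x / 4 + p) (1/4) x := by
      simpa using ((hasDerivAt_id x).div_const 4).add_const p
    have h2 : HasDerivAt (fun x => p * Real.exp x / D x)
        ((p * Real.exp x * D x - p * Real.exp x * (p * Real.exp x)) / (D x) ^ 2) x :=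
      ((Real.hasDerivAt_exp x).const_mul p).div (hDd x) (hDpos x).ne'
    exact h1.sub h2
  have hFd : ∀ x, HasDerivAt F (G x) x := by
    intro x
    have h1 : HasDerivAt (fun x : ℝ => x ^ 2 / 8 + p * x) (x / 4 + p) x := by
      have := ((hasDerivAt_pow 2 x).div_const 8).add ((hasDerivAt_id x).const_mul p)
      exact this.congr_deriv (by rw [show (2:ℕ) - 1 = 1 from rfl]; push_cast; ring)
    have h2 : HasDerivAt (fun x => Real.log (D x)) (p * Real.exp x / D x) x :=
      (hDd x).log (hDpos x).ne'
    exact h1.sub h2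
  have hGnonneg : ∀ x, 0 ≤ x → 0 ≤ G x := by
    intro x hx
    have hmono : MonotoneOn G (Set.Ici (0:ℝ)) := by
      apply monotoneOn_of_deriv_nonneg (convex_Ici 0)
      · exact fun y _ => ((hGd y).continuousAt).continuousWithinAt
      · exact fun y _ => ((hGd y).differentiableAt).differentiableWithinAt
      · intro y hy
        rw [(hGd y).deriv]
        have h1 : 0 < D y := hDpos y
        have h2 : 0 < Real.exp y := Real.exp_pos y
        rw [sub_nonneg, div_le_iff₀ (by positivity)]
        have hexp : (0:ℝ) ≤ (1 - p + p * Real.exp y - 2 * (p * Real.exp y)) ^ 2 :=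
          sq_nonneg _
        simp only [hD]
        nlinarith [hexp]
    have hG0 : G 0 = 0 := by
      simp only [hG]
      rw [show D 0 = 1 by simp [hD]]
      simp
    calc (0:ℝ) = G 0 := hG0.symm
    _ ≤ G x := hmono (by simp) (by exact hx) hx
  have hmonoF : MonotoneOn F (Set.Ici (0:ℝ)) := by
    apply monotoneOn_of_deriv_nonneg (convex_Ici 0)
    · exact fun y _ => ((hFd y).continuousAt).continuousWithinAt
    · exact fun y _ => ((hFd y).differentiableAt).differentiableWithinAt
    · intro y hy
      rw [(hFd y).deriv]
      exact hGnonneg y (le_of_lt (by simpa using hy))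
  have hF0 : F 0 = 0 := by
    simp only [hF]
    rw [show D 0 = 1 by simp [hD]]
    simp
  have : 0 ≤ F h := by
    calc (0:ℝ) = F 0 := hF0.symm
    _ ≤ F h := hmonoF (by simp) (by exact hh) hh
  simp only [hF] at this
  linarith

private lemma hoeffding_sum {A : Type*} [Fintype A] [Nonempty A] (w v : A → ℝ)
    (hw0 : ∀ a, 0 ≤ w a) (hw1 : ∑ a, w a = 1) (hmean : ∑ a, w a * v a = 0)
    (M : ℝ) (hosc : ∀ a a', v a - v a' ≤ M) :
    ∑ a, w a * Real.exp (v a) ≤ Real.exp (M ^ 2 / 8) := by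
  have hM0 : 0 ≤ M := by simpa using hosc (Classical.arbitrary A) (Classical.arbitrary A)
  have hne : (univ : Finset A).Nonempty := univ_nonempty
  set lo := univ.inf' hne v with hlo
  set hi := univ.sup' hne v with hhi
  have hlov : ∀ a, lo ≤ v a := fun a => inf'_le _ (mem_univ a)
  have hvhi : ∀ a, v a ≤ hi := fun a => le_sup' _ (mem_univ a)
  obtain ⟨amax, -, hamax⟩ := exists_mem_eq_sup' hne v
  obtain ⟨amin, -, hamin⟩ := exists_mem_eq_inf' hne v
  have hhm : hi - lo ≤ M := by
    rw [show hi = v amax from hamax, show lo = v amin from hamin]; exact hosc _ _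
  have hlo0 : lo ≤ 0 := by
    have h1 : ∑ a, w a * lo ≤ ∑ a, w a * v a :=
      sum_le_sum fun a _ => mul_le_mul_of_nonneg_left (hlov a) (hw0 a)
    rw [hmean, ← sum_mul, hw1, one_mul] at h1
    exact h1
  have hhi0 : 0 ≤ hi := by
    have h1 : ∑ a, w a * v a ≤ ∑ a, w a * hi :=
      sum_le_sum fun a _ => mul_le_mul_of_nonneg_left (hvhi a) (hw0 a)
    rw [hmean, ← sum_mul, hw1, one_mul] at h1
    exact h1
  by_cases hlh : hi ≤ lo
  · have hv0 : ∀ a, v a = 0 := by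
      intro a
      have := hlov a; have := hvhi a
      have : lo = 0 := le_antisymm hlo0 (le_trans hhi0 hlh)
      have : hi = 0 := le_antisymm (le_trans hlh hlo0) hhi0
      have := hlov a; have := hvhi a
      linarith
    simp only [hv0, Real.exp_zero, mul_one]
    rw [hw1]
    exact Real.one_le_exp (by positivity)
  · push_neg at hlh
    have hgap : 0 < hi - lo := by linarith
    set h := hi - lo with hdef
    set p := -lo / h with hpdef
    have hp0 : 0 ≤ p := by
      apply div_nonneg (by linarith) hgap.le
    have hp1 : p ≤ 1 := by
      rw [div_le_one hgap]; linarith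
    have hph : p * h = -lo := div_mul_cancel₀ _ hgap.ne'
    -- convexity step
    have step1 : ∀ a, Real.exp (v a) ≤
        ((hi - v a) * Real.exp lo + (v a - lo) * Real.exp hi) / (hi - lo) := by
      intro a
      have c1 : (0:ℝ) ≤ (hi - v a) / (hi - lo) := div_nonneg (by linarith [hvhi a]) hgap.le
      have c2 : (0:ℝ) ≤ (v a - lo) / (hi - lo) := div_nonneg (by linarith [hlov a]) hgap.le
      have c3 : (hi - v a) / (hi - lo) + (v a - lo) / (hi - lo) = 1 := by
        rw [← add_div, div_eq_one_iff_eq hgap.ne']; ring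
      have hc := convexOn_exp.2 (Set.mem_univ lo) (Set.mem_univ hi) c1 c2 c3
      have harg : ((hi - v a) / (hi - lo)) • lo + ((v a - lo) / (hi - lo)) • hi = v a := by
        simp only [smul_eq_mul]
        field_simp
        ring
      rw [harg] at hc
      simp only [smul_eq_mul] at hc
      calc Real.exp (v a) ≤ (hi - v a) / (hi - lo) * Real.exp lo
            + (v a - lo) / (hi - lo) * Real.exp hi := hc
        _ = ((hi - v a) * Real.exp lo + (v a - lo) * Real.exp hi) / (hi - lo) := by
            field_simp
    have step2 : ∑ a, w a * Real.exp (v a) ≤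
        (hi * Real.exp lo - lo * Real.exp hi) / (hi - lo) := by
      calc ∑ a, w a * Real.exp (v a)
          ≤ ∑ a, w a * (((hi - v a) * Real.exp lo + (v a - lo) * Real.exp hi) / (hi - lo)) :=
            sum_le_sum fun a _ => mul_le_mul_of_nonneg_left (step1 a) (hw0 a)
        _ = ∑ a, (((hi * Real.exp lo - lo * Real.exp hi) * w a
              + (Real.exp hi - Real.exp lo) * (w a * v a)) / (hi - lo)) := by
            apply sum_congr rfl; intro a _; field_simp; ring
        _ = (hi * Real.exp lo - lo * Real.exp hi) / (hi - lo) := by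
            rw [← sum_div, sum_add_distrib, ← mul_sum, ← mul_sum, hw1, hmean]
            field_simp
            ring
    have key := hoeffding_core p hp0 hp1 h hgap.le
    rw [Real.log_le_iff_le_exp (expAux_pos p hp0 hp1 h)] at key
    have e2 : (hi * Real.exp lo - lo * Real.exp hi) / (hi - lo)
        = Real.exp lo * (1 - p + p * Real.exp h) := by
      have : Real.exp hi = Real.exp lo * Real.exp h := by
        rw [← Real.exp_add]; congr 1; simp [hdef]
      rw [this, hpdef]
      field_simp
      ring
    have e3 : Real.exp lo * Real.exp (h ^ 2 / 8 + p * h) = Real.exp (h ^ 2 / 8) := by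
      rw [← Real.exp_add, hph]; congr 1; ring
    calc ∑ a, w a * Real.exp (v a)
        ≤ (hi * Real.exp lo - lo * Real.exp hi) / (hi - lo) := step2
      _ = Real.exp lo * (1 - p + p * Real.exp h) := e2
      _ ≤ Real.exp lo * Real.exp (h ^ 2 / 8 + p * h) :=
          mul_le_mul_of_nonneg_left key (Real.exp_pos _).le
      _ = Real.exp (h ^ 2 / 8) := e3
      _ ≤ Real.exp (M ^ 2 / 8) := by
          apply Real.exp_le_exp.2
          have : h ≤ M := hhm
          nlinarith


section Chain
variable {N : ℕ} {A : Type*} [Fintype A] [Nonempty A] [DecidableEq A]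

private def Efun (hN : 0 < N) (p : Fin N → (Fin N → A) → A → ℝ) (g : Fin N → A → ℝ) :
    ℕ → (Fin N → A) → ℝ
  | 0 => fun x => ∑ i, g i (x i)
  | (r+1) => fun x =>
      ∑ a, p ⟨N - (r+1), by omega⟩ x a *
        Efun hN p g r (Function.update x ⟨N - (r+1), by omega⟩ a)

private def Pprod (p : Fin N → (Fin N → A) → A → ℝ) (m : ℕ) (x : Fin N → A) : ℝ :=
  ∏ j ∈ univ.filter (fun j : Fin N => (j : ℕ) < m), p j x (x j)

private lemma sum_update_eq (j : Fin N) (F : (Fin N → A) → ℝ) :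
    ∑ x : Fin N → A, ∑ a : A, F (Function.update x j a)
      = (Fintype.card A : ℝ) * ∑ x : Fin N → A, F x := by
  classical
  set e := Equiv.funSplitAt j A with he
  have key : ∀ (b : A) (z : {i : Fin N // i ≠ j} → A) (a : A),
      Function.update (e.symm (b, z)) j a = e.symm (a, z) := by
    intro b z a
    funext i
    by_cases hi : i = j
    · subst hi; simp [he, Equiv.funSplitAt_symm_apply]
    · simp [he, Function.update_of_ne hi, Equiv.funSplitAt_symm_apply, hi]
  have esum : ∀ G : (Fin N → A) → ℝ,
      ∑ q : A × ({i : Fin N // i ≠ j} → A), G (e.symm q) = ∑ x : Fin N → A, G x :=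
    fun G => Fintype.sum_equiv e.symm _ _ (fun q => rfl)
  calc ∑ x : Fin N → A, ∑ a : A, F (Function.update x j a)
      = ∑ q : A × ({i : Fin N // i ≠ j} → A), ∑ a, F (Function.update (e.symm q) j a) :=
        (esum _).symm
    _ = ∑ b : A, ∑ z : {i : Fin N // i ≠ j} → A, ∑ a, F (e.symm (a, z)) := by
        rw [Fintype.sum_prod_type]
        exact Finset.sum_congr rfl fun b _ => Finset.sum_congr rfl fun z _ =>
          Finset.sum_congr rfl fun a _ => by rw [key]
    _ = ∑ _b : A, ∑ q : A × ({i : Fin N // i ≠ j} → A), F (e.symm q) := by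
        apply Finset.sum_congr rfl
        intro b _
        rw [Fintype.sum_prod_type]
        exact Finset.sum_comm
    _ = (Fintype.card A : ℝ) * ∑ x : Fin N → A, F x := by
        rw [Finset.sum_const, esum F, nsmul_eq_mul, Fintype.card]

end Chain

section Chain2
set_option linter.unusedSectionVars false
variable {N : ℕ} {A : Type*} [Fintype A] [Nonempty A] [DecidableEq A]
variable (hN : 0 < N) (p : Fin N → (Fin N → A) → A → ℝ) (g : Fin N → A → ℝ)

private lemma Pprod_zero (x : Fin N → A) : Pprod p 0 x = 1 := by
  simp [Pprod]

private lemma Pprod_univ (x : Fin N → A) : Pprod p N x = ∏ j, p j x (x j) := by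
  unfold Pprod
  rw [Finset.filter_true_of_mem (fun j _ => j.isLt)]

private lemma Pprod_succ (m : ℕ) (hm : m < N) (x : Fin N → A) :
    Pprod p (m + 1) x = Pprod p m x * p ⟨m, hm⟩ x (x ⟨m, hm⟩) := by
  unfold Pprod
  have hins : (univ.filter (fun j : Fin N => (j : ℕ) < m + 1))
      = insert ⟨m, hm⟩ (univ.filter (fun j : Fin N => (j : ℕ) < m)) := by
    ext j
    simp only [mem_filter, mem_univ, true_and, mem_insert, Fin.ext_iff]
    omega
  rw [hins, Finset.prod_insert (by simp), mul_comm]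

private lemma Pprod_nonneg (hp0 : ∀ j x a, 0 ≤ p j x a) (m : ℕ) (x : Fin N → A) :
    0 ≤ Pprod p m x :=
  Finset.prod_nonneg fun j _ => hp0 j x (x j)

private lemma Pprod_congr (hcaus : ∀ j x y, (∀ i, i < j → x i = y i) → p j x = p j y)
    (m : ℕ) (x y : Fin N → A) (hxy : ∀ i : Fin N, (i : ℕ) < m → x i = y i) :
    Pprod p m x = Pprod p m y := by
  unfold Pprod
  apply Finset.prod_congr rfl
  intro j hj
  simp only [mem_filter, mem_univ, true_and] at hj
  rw [hcaus j x y (fun i hi => hxy i (lt_trans hi hj)), hxy j hj]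

private lemma Efun_congr (hcaus : ∀ j x y, (∀ i, i < j → x i = y i) → p j x = p j y) :
    ∀ (r : ℕ), r ≤ N → ∀ (x y : Fin N → A),
      (∀ i : Fin N, (i : ℕ) < N - r → x i = y i) → Efun hN p g r x = Efun hN p g r y := by
  intro r
  induction r with
  | zero =>
    intro _ x y hxy
    unfold Efun
    exact Finset.sum_congr rfl fun i _ => by rw [hxy i (by simpa using i.isLt)]
  | succ r ih =>
    intro hr x y hxy
    have hrN : r < N := by omega
    unfold Efun
    apply Finset.sum_congr rfl
    intro a _
    have hj : (⟨N - (r + 1), by omega⟩ : Fin N) = ⟨N - (r + 1), by omega⟩ := rfl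
    have hpxy : p ⟨N - (r + 1), by omega⟩ x = p ⟨N - (r + 1), by omega⟩ y := by
      apply hcaus
      intro i hi
      exact hxy i (by exact hi)
    rw [hpxy]
    congr 1
    apply ih hrN.le
    intro i hi
    by_cases hij : i = (⟨N - (r + 1), by omega⟩ : Fin N)
    · rw [hij]; simp
    · rw [Function.update_of_ne hij, Function.update_of_ne hij]
      apply hxy
      have : (i : ℕ) ≠ N - (r + 1) := fun hc => hij (Fin.ext hc)
      omega

end Chain2

section Chain3
set_option linter.unusedSectionVars false
set_option linter.unnecessarySimpa false
variable {N : ℕ} {A : Type*} [Fintype A] [Nonempty A] [DecidableEq A]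
variable (hN : 0 < N) (p : Fin N → (Fin N → A) → A → ℝ) (g : Fin N → A → ℝ)


private def Tfun (lam c₀ : ℝ) (r : ℕ) : ℝ :=
  ∑ x : Fin N → A, Pprod p (N - r) x * Real.exp (lam * (Efun hN p g r x - c₀))

private def Ifun (r : ℕ) : ℝ :=
  ∑ x : Fin N → A, Pprod p (N - r) x * Efun hN p g r x

private lemma update_split (hcaus : ∀ j x y, (∀ i, i < j → x i = y i) → p j x = p j y)
    (r : ℕ) (hr : r < N) (x : Fin N → A) (a : A) :
    Pprod p (N - r) (Function.update x ⟨N - (r+1), by omega⟩ a)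
      = Pprod p (N - (r+1)) x * p ⟨N - (r+1), by omega⟩ x a := by
  set j : Fin N := ⟨N - (r+1), by omega⟩ with hj
  have hNr : N - r = (N - (r+1)) + 1 := by omega
  rw [hNr, Pprod_succ p (N - (r+1)) (by omega)]
  have h1 : Pprod p (N - (r+1)) (Function.update x j a) = Pprod p (N - (r+1)) x := by
    apply Pprod_congr p hcaus
    intro i hi
    apply Function.update_of_ne
    intro hc
    rw [hc] at hi
    simp [hj] at hi
  have h2 : p j (Function.update x j a) = p j x := by
    apply hcaus
    intro i hi
    apply Function.update_of_ne (ne_of_lt hi)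
  have h3 : (Function.update x j a) j = a := Function.update_self j a x
  calc Pprod p (N - (r+1)) (Function.update x j a)
        * p ⟨N - (r+1), by omega⟩ (Function.update x j a) ((Function.update x j a) ⟨N - (r+1), by omega⟩)
      = Pprod p (N - (r+1)) x * p j x a := by rw [h1]; rw [show (⟨N - (r+1), by omega⟩ : Fin N) = j from rfl, h2, h3]

private lemma Efun_succ_eq (r : ℕ) (x : Fin N → A) :
    Efun hN p g (r + 1) x
      = ∑ a, p ⟨N - (r+1), by omega⟩ x a * Efun hN p g r (Function.update x ⟨N - (r+1), by omega⟩ a) := rfl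

private lemma Tfun_step (hp0 : ∀ j x a, 0 ≤ p j x a) (hp1 : ∀ j x, ∑ a, p j x a = 1)
    (hcaus : ∀ j x y, (∀ i, i < j → x i = y i) → p j x = p j y)
    (lam Mb c₀ : ℝ) (hMb : 0 ≤ Mb)
    (hoscE : ∀ (r : ℕ), r < N → ∀ (x : Fin N → A) (a a' : A),
      Efun hN p g r (Function.update x ⟨N - (r+1), by omega⟩ a)
        - Efun hN p g r (Function.update x ⟨N - (r+1), by omega⟩ a') ≤ Mb)
    (r : ℕ) (hr : r < N) :
    (Fintype.card A : ℝ) * Tfun hN p g lam c₀ r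
      ≤ Real.exp (lam ^ 2 * Mb ^ 2 / 8) * Tfun hN p g lam c₀ (r + 1) := by
  set j : Fin N := ⟨N - (r+1), by omega⟩ with hj
  have base := sum_update_eq j
    (fun x => Pprod p (N - r) x * Real.exp (lam * (Efun hN p g r x - c₀)))
  have inner : ∀ x : Fin N → A,
      ∑ a, p j x a * Real.exp (lam * (Efun hN p g r (Function.update x j a) - c₀))
        ≤ Real.exp (lam ^ 2 * Mb ^ 2 / 8)
            * Real.exp (lam * (Efun hN p g (r + 1) x - c₀)) := by
    intro x
    set E1 : ℝ := Efun hN p g (r + 1) x with hE1d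
    have hE1 : E1 = ∑ a, p j x a * Efun hN p g r (Function.update x j a) :=
      Efun_succ_eq hN p g r x
    set v : A → ℝ := fun a => lam * (Efun hN p g r (Function.update x j a) - E1) with hv
    have hmean : ∑ a, p j x a * v a = 0 := by
      have expand : ∑ a, p j x a * v a
          = lam * (∑ a, p j x a * Efun hN p g r (Function.update x j a))
            - lam * E1 * (∑ a, p j x a) := by
        rw [Finset.mul_sum, Finset.mul_sum, ← Finset.sum_sub_distrib]
        exact Finset.sum_congr rfl fun a _ => by simp only [hv]; ring
      rw [expand, hp1 j x, ← hE1]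
      ring
    have hosc' : ∀ a a', v a - v a' ≤ |lam| * Mb := by
      intro a a'
      have h1 := hoscE r hr x a a'
      have h2 := hoscE r hr x a' a
      have : v a - v a'
          = lam * (Efun hN p g r (Function.update x j a)
              - Efun hN p g r (Function.update x j a')) := by simp only [hv]; ring
      rw [this]
      calc lam * (Efun hN p g r (Function.update x j a)
              - Efun hN p g r (Function.update x j a'))
          ≤ |lam * (Efun hN p g r (Function.update x j a)
              - Efun hN p g r (Function.update x j a'))| := le_abs_self _
        _ = |lam| * |Efun hN p g r (Function.update x j a)
              - Efun hN p g r (Function.update x j a')| := abs_mul _ _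
        _ ≤ |lam| * Mb := by
            apply mul_le_mul_of_nonneg_left _ (abs_nonneg lam)
            exact abs_le.2 ⟨by linarith, h1⟩
    have hoeff := hoeffding_sum (fun a => p j x a) v (fun a => hp0 j x a) (hp1 j x)
      hmean (|lam| * Mb) hosc'
    have habs : (|lam| * Mb) ^ 2 = lam ^ 2 * Mb ^ 2 := by
      rw [mul_pow, sq_abs]
    rw [habs] at hoeff
    have split : ∀ a, lam * (Efun hN p g r (Function.update x j a) - c₀)
        = v a + lam * (E1 - c₀) := fun a => by simp only [hv]; ring
    calc ∑ a, p j x a * Real.exp (lam * (Efun hN p g r (Function.update x j a) - c₀))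
        = (∑ a, p j x a * Real.exp (v a)) * Real.exp (lam * (E1 - c₀)) := by
          rw [Finset.sum_mul]
          exact Finset.sum_congr rfl fun a _ => by
            rw [split a, Real.exp_add]; ring
      _ ≤ Real.exp (lam ^ 2 * Mb ^ 2 / 8) * Real.exp (lam * (E1 - c₀)) :=
          mul_le_mul_of_nonneg_right hoeff (Real.exp_pos _).le
  calc (Fintype.card A : ℝ) * Tfun hN p g lam c₀ r
      = ∑ x : Fin N → A, ∑ a : A,
          Pprod p (N - r) (Function.update x j a)
            * Real.exp (lam * (Efun hN p g r (Function.update x j a) - c₀)) := base.symm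
    _ = ∑ x : Fin N → A, Pprod p (N - (r+1)) x
          * ∑ a, p j x a * Real.exp (lam * (Efun hN p g r (Function.update x j a) - c₀)) := by
        apply Finset.sum_congr rfl
        intro x _
        rw [Finset.mul_sum]
        apply Finset.sum_congr rfl
        intro a _
        rw [update_split p hcaus r hr x a]
        ring
    _ ≤ ∑ x : Fin N → A, Pprod p (N - (r+1)) x
          * (Real.exp (lam ^ 2 * Mb ^ 2 / 8)
              * Real.exp (lam * (Efun hN p g (r + 1) x - c₀))) := by
        apply Finset.sum_le_sum
        intro x _
        exact mul_le_mul_of_nonneg_left (inner x) (Pprod_nonneg p hp0 _ x)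
    _ = Real.exp (lam ^ 2 * Mb ^ 2 / 8) * Tfun hN p g lam c₀ (r + 1) := by
        rw [Tfun, Finset.mul_sum]
        exact Finset.sum_congr rfl fun x _ => by ring

end Chain3

section Chain4
set_option linter.unusedSectionVars false
variable {N : ℕ} {A : Type*} [Fintype A] [Nonempty A] [DecidableEq A]
variable (hN : 0 < N) (p : Fin N → (Fin N → A) → A → ℝ) (g : Fin N → A → ℝ)

private lemma card_fun_real : (Fintype.card (Fin N → A) : ℝ) = (Fintype.card A : ℝ) ^ N := by
  rw [Fintype.card_fun, Fintype.card_fin]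
  push_cast
  ring

private lemma Tfun_end (lam c₀ : ℝ) (hc₀ : ∀ x : Fin N → A, Efun hN p g N x = c₀) :
    Tfun hN p g lam c₀ N = (Fintype.card A : ℝ) ^ N := by
  unfold Tfun
  rw [Nat.sub_self]
  have : ∀ x : Fin N → A, Pprod p 0 x * Real.exp (lam * (Efun hN p g N x - c₀)) = 1 := by
    intro x
    rw [Pprod_zero, hc₀ x]
    simp
  rw [Finset.sum_congr rfl (fun x _ => this x), Finset.sum_const, card_univ, nsmul_eq_mul,
    mul_one, card_fun_real]

private lemma Tfun_mgf (hp0 : ∀ j x a, 0 ≤ p j x a) (hp1 : ∀ j x, ∑ a, p j x a = 1)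
    (hcaus : ∀ j x y, (∀ i, i < j → x i = y i) → p j x = p j y)
    (lam Mb c₀ : ℝ) (hMb : 0 ≤ Mb) (hc₀ : ∀ x : Fin N → A, Efun hN p g N x = c₀)
    (hoscE : ∀ (r : ℕ), r < N → ∀ (x : Fin N → A) (a a' : A),
      Efun hN p g r (Function.update x ⟨N - (r+1), by omega⟩ a)
        - Efun hN p g r (Function.update x ⟨N - (r+1), by omega⟩ a') ≤ Mb) :
    Tfun hN p g lam c₀ 0 ≤ Real.exp ((N : ℝ) * (lam ^ 2 * Mb ^ 2 / 8)) := by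
  have hcard : (0:ℝ) < (Fintype.card A : ℝ) := by
    exact_mod_cast Fintype.card_pos
  have main : ∀ s : ℕ, s ≤ N → Tfun hN p g lam c₀ (N - s)
      ≤ Real.exp ((s : ℝ) * (lam ^ 2 * Mb ^ 2 / 8)) * (Fintype.card A : ℝ) ^ (N - s) := by
    intro s
    induction s with
    | zero =>
      intro _
      rw [Nat.sub_zero, Tfun_end hN p g lam c₀ hc₀]
      simp
    | succ s ih =>
      intro hs
      have hr : N - (s+1) < N := by omega
      have hstep := Tfun_step hN p g hp0 hp1 hcaus lam Mb c₀ hMb hoscE (N - (s+1)) hr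
      have hsucc : N - (s+1) + 1 = N - s := by omega
      rw [hsucc] at hstep
      have ih' := ih (by omega)
      have hpow : (Fintype.card A : ℝ) ^ (N - s)
          = (Fintype.card A : ℝ) * (Fintype.card A : ℝ) ^ (N - (s+1)) := by
        rw [← pow_succ']
        congr 1
        omega
      have : (Fintype.card A : ℝ) * Tfun hN p g lam c₀ (N - (s+1))
          ≤ (Fintype.card A : ℝ)
            * (Real.exp (((s:ℝ)+1) * (lam ^ 2 * Mb ^ 2 / 8)) * (Fintype.card A : ℝ) ^ (N - (s+1))) := by
        calc (Fintype.card A : ℝ) * Tfun hN p g lam c₀ (N - (s+1))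
            ≤ Real.exp (lam ^ 2 * Mb ^ 2 / 8) * Tfun hN p g lam c₀ (N - s) := hstep
          _ ≤ Real.exp (lam ^ 2 * Mb ^ 2 / 8)
              * (Real.exp ((s:ℝ) * (lam ^ 2 * Mb ^ 2 / 8)) * (Fintype.card A : ℝ) ^ (N - s)) :=
              mul_le_mul_of_nonneg_left ih' (Real.exp_pos _).le
          _ = (Fintype.card A : ℝ)
              * (Real.exp (((s:ℝ)+1) * (lam ^ 2 * Mb ^ 2 / 8)) * (Fintype.card A : ℝ) ^ (N - (s+1))) := by
              rw [hpow, show ((s:ℝ)+1) * (lam ^ 2 * Mb ^ 2 / 8)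
                  = lam ^ 2 * Mb ^ 2 / 8 + (s:ℝ) * (lam ^ 2 * Mb ^ 2 / 8) by ring,
                Real.exp_add]
              ring
      have := (mul_le_mul_iff_right₀ hcard).1 this
      calc Tfun hN p g lam c₀ (N - (s+1))
          ≤ Real.exp (((s:ℝ)+1) * (lam ^ 2 * Mb ^ 2 / 8)) * (Fintype.card A : ℝ) ^ (N - (s+1)) := this
        _ = Real.exp (((s:ℕ)+1 : ℕ) * (lam ^ 2 * Mb ^ 2 / 8)) * (Fintype.card A : ℝ) ^ (N - (s+1)) := by
            push_cast
            ring_nf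
  have := main N le_rfl
  rw [Nat.sub_self, pow_zero, mul_one] at this
  exact this

private lemma Ifun_step (hp1 : ∀ j x, ∑ a, p j x a = 1)
    (hcaus : ∀ j x y, (∀ i, i < j → x i = y i) → p j x = p j y)
    (r : ℕ) (hr : r < N) :
    (Fintype.card A : ℝ) * Ifun hN p g r = Ifun hN p g (r + 1) := by
  set j : Fin N := ⟨N - (r+1), by omega⟩ with hj
  have base := sum_update_eq j (fun x => Pprod p (N - r) x * Efun hN p g r x)
  calc (Fintype.card A : ℝ) * Ifun hN p g r
      = ∑ x : Fin N → A, ∑ a : A,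
          Pprod p (N - r) (Function.update x j a) * Efun hN p g r (Function.update x j a) :=
        base.symm
    _ = ∑ x : Fin N → A, Pprod p (N - (r+1)) x
          * ∑ a, p j x a * Efun hN p g r (Function.update x j a) := by
        apply Finset.sum_congr rfl
        intro x _
        rw [Finset.mul_sum]
        apply Finset.sum_congr rfl
        intro a _
        rw [update_split p hcaus r hr x a]
        ring
    _ = Ifun hN p g (r + 1) := by
        apply Finset.sum_congr rfl
        intro x _
        rw [← Efun_succ_eq hN p g r x]

private lemma Ifun_eq (hp1 : ∀ j x, ∑ a, p j x a = 1)
    (hcaus : ∀ j x y, (∀ i, i < j → x i = y i) → p j x = p j y)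
    (c₀ : ℝ) (hc₀ : ∀ x : Fin N → A, Efun hN p g N x = c₀) :
    c₀ = ∑ x : Fin N → A, (∏ j, p j x (x j)) * Efun hN p g 0 x := by
  have hcard : (0:ℝ) < (Fintype.card A : ℝ) := by exact_mod_cast Fintype.card_pos
  have chain : ∀ s : ℕ, s ≤ N →
      Ifun hN p g s = (Fintype.card A : ℝ) ^ s * Ifun hN p g 0 := by
    intro s
    induction s with
    | zero => intro _; simp
    | succ s ih =>
      intro hs
      rw [← Ifun_step hN p g hp1 hcaus s (by omega), ih (by omega), pow_succ']
      ring
  have hIN : Ifun hN p g N = (Fintype.card A : ℝ) ^ N * c₀ := by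
    unfold Ifun
    rw [Nat.sub_self]
    have : ∀ x : Fin N → A, Pprod p 0 x * Efun hN p g N x = c₀ := by
      intro x
      rw [Pprod_zero, hc₀ x, one_mul]
    rw [Finset.sum_congr rfl (fun x _ => this x), Finset.sum_const, card_univ, nsmul_eq_mul,
      card_fun_real]
  have hI0 : Ifun hN p g 0 = ∑ x : Fin N → A, (∏ j, p j x (x j)) * Efun hN p g 0 x := by
    unfold Ifun
    rw [Nat.sub_zero]
    exact Finset.sum_congr rfl fun x _ => by rw [Pprod_univ]
  have := chain N le_rfl
  rw [hIN] at this
  have hpowpos : (0:ℝ) < (Fintype.card A : ℝ) ^ N := pow_pos hcard N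
  have := mul_left_cancel₀ hpowpos.ne' this
  rw [this, hI0]

end Chain4



section Tree
set_option linter.unusedSectionVars false
variable {N : ℕ} {A : Type*} [Fintype A] [Nonempty A] [DecidableEq A]
variable (π : Fin N → Option (Fin N)) (α : ℝ)

private def wAux : ℕ → Fin N → ℝ
  | 0 => fun _ => 0
  | (f+1) => fun i => 1 + α * ∑ j ∈ univ.filter (fun j : Fin N => π j = some i), wAux f j

private lemma wAux_nonneg (hα : 0 ≤ α) : ∀ (f : ℕ) (i : Fin N), 0 ≤ wAux π α f i := by
  intro f
  induction f with
  | zero => intro i; simp [wAux]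
  | succ f ih =>
    intro i
    have : 0 ≤ ∑ j ∈ univ.filter (fun j : Fin N => π j = some i), wAux π α f j :=
      Finset.sum_nonneg fun j _ => ih j
    simp only [wAux]
    positivity

private lemma wAux_stab (hπ : ∀ j i : Fin N, π j = some i → i < j) :
    ∀ (k : ℕ) (i : Fin N), N - (i : ℕ) ≤ k → ∀ f f' : ℕ,
      N - (i : ℕ) ≤ f → N - (i : ℕ) ≤ f' → wAux π α f i = wAux π α f' i := by
  intro k
  induction k with
  | zero => intro i hk; have := i.isLt; omega
  | succ k ih =>
    intro i hk f f' hf hf'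
    have hiN := i.isLt
    match f, f' with
    | 0, _ => omega
    | _ + 1, 0 => omega
    | f₁ + 1, f₁' + 1 =>
      simp only [wAux]
      congr 1
      congr 1
      apply Finset.sum_congr rfl
      intro j hj
      simp only [mem_filter, mem_univ, true_and] at hj
      have hij : i < j := hπ j i hj
      have hij' : (i : ℕ) < (j : ℕ) := hij
      exact ih j (by omega) f₁ f₁' (by omega) (by omega)

private def wFun (i : Fin N) : ℝ := wAux π α N i

private lemma wFun_eq (hπ : ∀ j i : Fin N, π j = some i → i < j) (i : Fin N) :
    wFun π α i = 1 + α * ∑ j ∈ univ.filter (fun j : Fin N => π j = some i), wFun π α j := by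
  have hiN := i.isLt
  have h1 : wAux π α N i = wAux π α (N + 1) i :=
    wAux_stab π α hπ (N - (i:ℕ)) i le_rfl N (N+1) (by omega) (by omega)
  unfold wFun
  rw [h1]
  rfl

private lemma wAux_le (hα : 0 < α) (D : ℕ)
    (houtdeg : ∀ i : Fin N, (univ.filter (fun j : Fin N => π j = some i)).card ≤ D)
    (hαD : α * (D : ℝ) < 1) :
    ∀ (f : ℕ) (i : Fin N), wAux π α f i ≤ 1 / (1 - α * (D : ℝ)) := by
  have hK : (0:ℝ) < 1 - α * (D : ℝ) := by linarith
  intro f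
  induction f with
  | zero =>
    intro i
    simp only [wAux]
    positivity
  | succ f ih =>
    intro i
    simp only [wAux]
    have hsum : ∑ j ∈ univ.filter (fun j : Fin N => π j = some i), wAux π α f j
        ≤ (D : ℝ) * (1 / (1 - α * (D : ℝ))) := by
      calc ∑ j ∈ univ.filter (fun j : Fin N => π j = some i), wAux π α f j
          ≤ ∑ _j ∈ univ.filter (fun j : Fin N => π j = some i), (1 / (1 - α * (D:ℝ))) :=
            Finset.sum_le_sum fun j _ => ih j
        _ = ((univ.filter (fun j : Fin N => π j = some i)).card : ℝ) * (1 / (1 - α * (D:ℝ))) := by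
            rw [Finset.sum_const, nsmul_eq_mul]
        _ ≤ (D : ℝ) * (1 / (1 - α * (D : ℝ))) := by
            apply mul_le_mul_of_nonneg_right _ (by positivity)
            exact_mod_cast houtdeg i
    have heq : 1 + α * ((D:ℝ) * (1 / (1 - α * (D:ℝ)))) = 1 / (1 - α * (D:ℝ)) := by
      field_simp
      ring
    calc 1 + α * ∑ j ∈ univ.filter (fun j : Fin N => π j = some i), wAux π α f j
        ≤ 1 + α * ((D:ℝ) * (1 / (1 - α * (D:ℝ)))) := by
          have := mul_le_mul_of_nonneg_left hsum hα.le
          linarith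
      _ = 1 / (1 - α * (D:ℝ)) := heq

private lemma wFun_le (hα : 0 < α) (D : ℕ)
    (houtdeg : ∀ i : Fin N, (univ.filter (fun j : Fin N => π j = some i)).card ≤ D)
    (hαD : α * (D : ℝ) < 1) (i : Fin N) :
    wFun π α i ≤ 1 / (1 - α * (D : ℝ)) := wAux_le π α hα D houtdeg hαD N i

end Tree



private lemma sum_sub_mul_le_dTV {A : Type*} [Fintype A] [Nonempty A] (μ ν F : A → ℝ)
    (hμ1 : ∑ a, μ a = 1) (hν1 : ∑ a, ν a = 1)
    (K : ℝ) (hF : ∀ a a', F a - F a' ≤ K) :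
    |∑ a, (μ a - ν a) * F a| ≤ dTV μ ν * K := by
  have hne : (univ : Finset A).Nonempty := univ_nonempty
  set lo := univ.inf' hne F with hlo
  set hi := univ.sup' hne F with hhi
  obtain ⟨amax, -, hamax⟩ := exists_mem_eq_sup' hne F
  obtain ⟨amin, -, hamin⟩ := exists_mem_eq_inf' hne F
  have hlov : ∀ a, lo ≤ F a := fun a => inf'_le _ (mem_univ a)
  have hvhi : ∀ a, F a ≤ hi := fun a => le_sup' _ (mem_univ a)
  have hhm : hi - lo ≤ K := by
    rw [show hi = F amax from hamax, show lo = F amin from hamin]; exact hF _ _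
  set c := (hi + lo) / 2 with hc
  have habs : ∀ a, |F a - c| ≤ K / 2 := by
    intro a
    rw [abs_le]
    constructor
    · have := hlov a; simp only [hc]; linarith
    · have := hvhi a; simp only [hc]; linarith
  have hshift : ∑ a, (μ a - ν a) * F a = ∑ a, (μ a - ν a) * (F a - c) := by
    rw [← sub_eq_zero, ← Finset.sum_sub_distrib]
    have : ∀ a, (μ a - ν a) * F a - (μ a - ν a) * (F a - c) = c * μ a - c * ν a := by
      intro a; ring
    rw [Finset.sum_congr rfl fun a _ => this a, Finset.sum_sub_distrib, ← Finset.mul_sum,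
      ← Finset.mul_sum, hμ1, hν1]
    ring
  have hK0 : 0 ≤ K := by have := hF (Classical.arbitrary A) (Classical.arbitrary A); linarith
  calc |∑ a, (μ a - ν a) * F a| = |∑ a, (μ a - ν a) * (F a - c)| := by rw [hshift]
    _ ≤ ∑ a, |(μ a - ν a) * (F a - c)| := Finset.abs_sum_le_sum_abs _ _
    _ ≤ ∑ a, |μ a - ν a| * (K / 2) := by
        apply Finset.sum_le_sum
        intro a _
        rw [abs_mul]
        exact mul_le_mul_of_nonneg_left (habs a) (abs_nonneg _)
    _ = dTV μ ν * K := by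
        rw [← Finset.sum_mul, dTV]
        ring

section Osc
set_option linter.unusedSectionVars false
variable {N : ℕ} {A : Type*} [Fintype A] [Nonempty A] [DecidableEq A]

private lemma wFun_nonneg (π : Fin N → Option (Fin N)) (α : ℝ) (hα : 0 ≤ α) (i : Fin N) :
    0 ≤ wFun π α i := wAux_nonneg π α hα N i

private lemma treeKernel_sum (π : Fin N → Option (Fin N)) (ρ : Fin N → A → ℝ)
    (P : Fin N → A → A → ℝ)
    (hρ : ∀ j, (∀ a, 0 ≤ ρ j a) ∧ ∑ a, ρ j a = 1)
    (hP : ∀ j x, (∀ a, 0 ≤ P j x a) ∧ ∑ a, P j x a = 1)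
    (k : Fin N) (z : Fin N → A) : ∑ a, treeKernel π ρ P k z a = 1 := by
  cases hπk : π k with
  | none => simp only [treeKernel, hπk]; exact (hρ k).2
  | some i => simp only [treeKernel, hπk]; exact (hP k (z i)).2

private lemma treeKernel_nonneg (π : Fin N → Option (Fin N)) (ρ : Fin N → A → ℝ)
    (P : Fin N → A → A → ℝ)
    (hρ : ∀ j, (∀ a, 0 ≤ ρ j a) ∧ ∑ a, ρ j a = 1)
    (hP : ∀ j x, (∀ a, 0 ≤ P j x a) ∧ ∑ a, P j x a = 1)
    (k : Fin N) (z : Fin N → A) (a : A) : 0 ≤ treeKernel π ρ P k z a := by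
  cases hπk : π k with
  | none => simp only [treeKernel, hπk]; exact (hρ k).1 a
  | some i => simp only [treeKernel, hπk]; exact (hP k (z i)).1 a

private lemma treeKernel_causal (π : Fin N → Option (Fin N))
    (hπ : ∀ j i : Fin N, π j = some i → i < j)
    (ρ : Fin N → A → ℝ) (P : Fin N → A → A → ℝ) :
    ∀ (j : Fin N) (x y : Fin N → A), (∀ i, i < j → x i = y i) →
      treeKernel π ρ P j x = treeKernel π ρ P j y := by
  intro j x y hxy
  cases hπj : π j with
  | none => simp only [treeKernel, hπj]
  | some i => simp only [treeKernel, hπj]; rw [hxy i (hπ j i hπj)]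

private lemma Efun_osc (hN : 0 < N)
    (π : Fin N → Option (Fin N)) (hπ : ∀ j i : Fin N, π j = some i → i < j)
    (ρ : Fin N → A → ℝ) (hρ : ∀ j, (∀ a, 0 ≤ ρ j a) ∧ ∑ a, ρ j a = 1)
    (P : Fin N → A → A → ℝ) (hP : ∀ j x, (∀ a, 0 ≤ P j x a) ∧ ∑ a, P j x a = 1)
    (α : ℝ) (hα : 0 < α)
    (hcontr : ∀ j i : Fin N, π j = some i → ∀ a a' : A, dTV (P j a) (P j a') ≤ α)
    (g : Fin N → A → ℝ) (hosc : ∀ i a a', |g i a - g i a'| ≤ 1) :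
    ∀ r : ℕ, r ≤ N → ∀ x y : Fin N → A,
      |Efun hN (treeKernel π ρ P) g r x - Efun hN (treeKernel π ρ P) g r y|
        ≤ ∑ i ∈ univ.filter (fun i : Fin N => (i : ℕ) < N - r ∧ x i ≠ y i),
            (1 + α * ∑ j ∈ univ.filter (fun j : Fin N => N - r ≤ (j : ℕ) ∧ π j = some i),
              wFun π α j) := by
  have hwnn : ∀ i : Fin N, 0 ≤ wFun π α i := wFun_nonneg π α hα.le
  have hBnn : ∀ (m : ℕ) (i : Fin N),
      0 ≤ 1 + α * ∑ j ∈ univ.filter (fun j : Fin N => m ≤ (j : ℕ) ∧ π j = some i), wFun π α j := by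
    intro m i
    have := Finset.sum_nonneg (f := fun j => wFun π α j)
      (s := univ.filter (fun j : Fin N => m ≤ (j : ℕ) ∧ π j = some i)) (fun j _ => hwnn j)
    nlinarith
  intro r
  induction r with
  | zero =>
    intro _ x y
    have e0 : ∀ z : Fin N → A, Efun hN (treeKernel π ρ P) g 0 z = ∑ i, g i (z i) := fun z => rfl
    rw [e0, e0]
    have hsplit : (∑ i, g i (x i)) - (∑ i, g i (y i))
        = ∑ i ∈ univ.filter (fun i : Fin N => (i:ℕ) < N - 0 ∧ x i ≠ y i),
            (g i (x i) - g i (y i)) := by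
      rw [← Finset.sum_sub_distrib]
      symm
      apply Finset.sum_filter_of_ne
      intro i _ hne
      refine ⟨by have := i.isLt; omega, fun hc => hne (by rw [hc, sub_self])⟩
    rw [hsplit]
    calc |∑ i ∈ univ.filter (fun i : Fin N => (i:ℕ) < N - 0 ∧ x i ≠ y i),
            (g i (x i) - g i (y i))|
        ≤ ∑ i ∈ univ.filter (fun i : Fin N => (i:ℕ) < N - 0 ∧ x i ≠ y i),
            |g i (x i) - g i (y i)| := Finset.abs_sum_le_sum_abs _ _
      _ ≤ ∑ i ∈ univ.filter (fun i : Fin N => (i:ℕ) < N - 0 ∧ x i ≠ y i),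
            (1 + α * ∑ j ∈ univ.filter (fun j : Fin N => N - 0 ≤ (j : ℕ) ∧ π j = some i),
              wFun π α j) := by
          apply Finset.sum_le_sum
          intro i _
          have h1 := hosc i (x i) (y i)
          have h2 := Finset.sum_nonneg (f := fun j => wFun π α j)
            (s := univ.filter (fun j : Fin N => N - 0 ≤ (j : ℕ) ∧ π j = some i))
            (fun j _ => hwnn j)
          nlinarith
  | succ r ih =>
    intro hr x y
    have hrN : r < N := by omega
    set p := treeKernel π ρ P with hp
    have hp1 : ∀ (k : Fin N) (z : Fin N → A), ∑ a, p k z a = 1 :=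
      treeKernel_sum π ρ P hρ hP
    have hp0 : ∀ (k : Fin N) (z : Fin N → A) (a : A), 0 ≤ p k z a :=
      treeKernel_nonneg π ρ P hρ hP
    set j : Fin N := ⟨N - (r+1), by omega⟩ with hj
    have hjval : (j : ℕ) = N - (r+1) := rfl
    have hdec : Efun hN p g (r+1) x - Efun hN p g (r+1) y
        = (∑ a, p j x a * (Efun hN p g r (Function.update x j a)
              - Efun hN p g r (Function.update y j a)))
          + ∑ a, (p j x a - p j y a) * Efun hN p g r (Function.update y j a) := by
      rw [Efun_succ_eq hN p g r x, Efun_succ_eq hN p g r y, ← Finset.sum_add_distrib,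
        ← Finset.sum_sub_distrib]
      apply Finset.sum_congr rfl
      intro a _
      ring
    -- filter identity for pairs updated at j
    have hfilter : ∀ a : A,
        univ.filter (fun i : Fin N => (i:ℕ) < N - r
            ∧ Function.update x j a i ≠ Function.update y j a i)
          = univ.filter (fun i : Fin N => (i:ℕ) < N - (r+1) ∧ x i ≠ y i) := by
      intro a
      ext i
      simp only [mem_filter, mem_univ, true_and]
      by_cases hij : i = j
      · rw [hij]
        simp only [Function.update_self, hjval]
        constructor
        · rintro ⟨-, hc⟩; exact absurd rfl hc
        · rintro ⟨hc, -⟩; omega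
      · rw [Function.update_of_ne hij, Function.update_of_ne hij]
        have hne : (i:ℕ) ≠ N - (r+1) := fun hc => hij (Fin.ext (hc.trans hjval.symm))
        constructor
        · rintro ⟨h1, h2⟩; exact ⟨by omega, h2⟩
        · rintro ⟨h1, h2⟩; exact ⟨by omega, h2⟩
    have key1 : ∀ a : A,
        |Efun hN p g r (Function.update x j a) - Efun hN p g r (Function.update y j a)|
          ≤ ∑ i ∈ univ.filter (fun i : Fin N => (i:ℕ) < N - (r+1) ∧ x i ≠ y i),
              (1 + α * ∑ j' ∈ univ.filter (fun j' : Fin N => N - r ≤ (j' : ℕ) ∧ π j' = some i),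
                wFun π α j') := by
      intro a
      have h1 := ih hrN.le (Function.update x j a) (Function.update y j a)
      rwa [hfilter a] at h1
    -- oscillation of a ↦ Efun r (update y j a) is at most wFun j
    have hoscF : ∀ a a' : A,
        Efun hN p g r (Function.update y j a) - Efun hN p g r (Function.update y j a')
          ≤ wFun π α j := by
      intro a a'
      have h1 := ih hrN.le (Function.update y j a) (Function.update y j a')
      have hsub : univ.filter (fun i : Fin N => (i:ℕ) < N - r
            ∧ Function.update y j a i ≠ Function.update y j a' i) ⊆ {j} := by
        intro i hi
        simp only [mem_filter, mem_univ, true_and] at hi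
        rcases hi with ⟨-, hi2⟩
        by_contra hij
        rw [mem_singleton] at hij
        rw [Function.update_of_ne hij, Function.update_of_ne hij] at hi2
        exact hi2 rfl
      have h2 := Finset.sum_le_sum_of_subset_of_nonneg hsub
        (f := fun i => 1 + α * ∑ j' ∈ univ.filter
            (fun j' : Fin N => N - r ≤ (j' : ℕ) ∧ π j' = some i), wFun π α j')
        (fun i _ _ => hBnn (N - r) i)
      rw [Finset.sum_singleton] at h2
      have h3 : (1 + α * ∑ j' ∈ univ.filter
            (fun j' : Fin N => N - r ≤ (j' : ℕ) ∧ π j' = some j), wFun π α j')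
          ≤ wFun π α j := by
        rw [wFun_eq π α hπ j]
        have hsub2 : univ.filter (fun j' : Fin N => N - r ≤ (j' : ℕ) ∧ π j' = some j)
            ⊆ univ.filter (fun j' : Fin N => π j' = some j) := by
          intro j' hj'
          simp only [mem_filter, mem_univ, true_and] at hj' ⊢
          exact hj'.2
        have h4 := Finset.sum_le_sum_of_subset_of_nonneg hsub2 (fun i _ _ => hwnn i)
        have h5 := mul_le_mul_of_nonneg_left h4 hα.le
        linarith
      calc Efun hN p g r (Function.update y j a) - Efun hN p g r (Function.update y j a')
          ≤ |Efun hN p g r (Function.update y j a) - Efun hN p g r (Function.update y j a')| :=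
            le_abs_self _
        _ ≤ _ := h1.trans (h2.trans h3)
    -- bound on the first sum
    have hΔ1 : |∑ a, p j x a * (Efun hN p g r (Function.update x j a)
          - Efun hN p g r (Function.update y j a))|
        ≤ ∑ i ∈ univ.filter (fun i : Fin N => (i:ℕ) < N - (r+1) ∧ x i ≠ y i),
            (1 + α * ∑ j' ∈ univ.filter (fun j' : Fin N => N - r ≤ (j' : ℕ) ∧ π j' = some i),
              wFun π α j') := by
      calc |∑ a, p j x a * (Efun hN p g r (Function.update x j a)
              - Efun hN p g r (Function.update y j a))|
          ≤ ∑ a, |p j x a * (Efun hN p g r (Function.update x j a)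
              - Efun hN p g r (Function.update y j a))| := Finset.abs_sum_le_sum_abs _ _
        _ ≤ ∑ a, p j x a * (∑ i ∈ univ.filter (fun i : Fin N => (i:ℕ) < N - (r+1) ∧ x i ≠ y i),
              (1 + α * ∑ j' ∈ univ.filter
                  (fun j' : Fin N => N - r ≤ (j' : ℕ) ∧ π j' = some i), wFun π α j')) := by
            apply Finset.sum_le_sum
            intro a _
            rw [abs_mul, abs_of_nonneg (hp0 j x a)]
            exact mul_le_mul_of_nonneg_left (key1 a) (hp0 j x a)
        _ = _ := by rw [← Finset.sum_mul, hp1 j x, one_mul]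
    -- per-index monotonicity of the weight sums
    have hB01 : ∀ i : Fin N,
        (1 + α * ∑ j' ∈ univ.filter (fun j' : Fin N => N - r ≤ (j' : ℕ) ∧ π j' = some i),
            wFun π α j')
        ≤ (1 + α * ∑ j' ∈ univ.filter (fun j' : Fin N => N - (r+1) ≤ (j' : ℕ) ∧ π j' = some i),
            wFun π α j') := by
      intro i
      have hsub : univ.filter (fun j' : Fin N => N - r ≤ (j' : ℕ) ∧ π j' = some i)
          ⊆ univ.filter (fun j' : Fin N => N - (r+1) ≤ (j' : ℕ) ∧ π j' = some i) := by
        intro j' hj'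
        simp only [mem_filter, mem_univ, true_and] at hj' ⊢
        exact ⟨by omega, hj'.2⟩
      have h4 := Finset.sum_le_sum_of_subset_of_nonneg hsub (fun i _ _ => hwnn i)
      have h5 := mul_le_mul_of_nonneg_left h4 hα.le
      linarith
    rw [hdec]
    cases hπj : π j with
    | none =>
      have hzero : ∀ a, p j x a - p j y a = 0 := by
        intro a
        simp only [hp, treeKernel, hπj]
        ring
      have hΔ2 : (∑ a, (p j x a - p j y a) * Efun hN p g r (Function.update y j a)) = 0 := by
        apply Finset.sum_eq_zero
        intro a _
        rw [hzero a, zero_mul]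
      rw [hΔ2, add_zero]
      exact hΔ1.trans (Finset.sum_le_sum fun i _ => hB01 i)
    | some rt =>
      have hpeq : ∀ z : Fin N → A, ∀ a, p j z a = P j (z rt) a := by
        intro z a
        simp only [hp, treeKernel, hπj]
      by_cases hxy : x rt = y rt
      · have hΔ2 : (∑ a, (p j x a - p j y a) * Efun hN p g r (Function.update y j a)) = 0 := by
          apply Finset.sum_eq_zero
          intro a _
          rw [hpeq x a, hpeq y a, hxy, sub_self, zero_mul]
        rw [hΔ2, add_zero]
        exact hΔ1.trans (Finset.sum_le_sum fun i _ => hB01 i)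
      · -- the parent coordinate differs
        have hrtj : rt < j := hπ j rt hπj
        have hrtval : (rt : ℕ) < N - (r+1) := by
          have : (rt : ℕ) < (j : ℕ) := hrtj
          omega
        have hΔ2 : |∑ a, (p j x a - p j y a) * Efun hN p g r (Function.update y j a)|
            ≤ α * wFun π α j := by
          have hrw : (∑ a, (p j x a - p j y a) * Efun hN p g r (Function.update y j a))
              = ∑ a, (P j (x rt) a - P j (y rt) a) * Efun hN p g r (Function.update y j a) := by
            apply Finset.sum_congr rfl
            intro a _
            rw [hpeq x a, hpeq y a]
          rw [hrw]
          have hdtv := sum_sub_mul_le_dTV (P j (x rt)) (P j (y rt))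
            (fun a => Efun hN p g r (Function.update y j a))
            (hP j (x rt)).2 (hP j (y rt)).2 (wFun π α j) hoscF
          calc |∑ a, (P j (x rt) a - P j (y rt) a) * Efun hN p g r (Function.update y j a)|
              ≤ dTV (P j (x rt)) (P j (y rt)) * wFun π α j := hdtv
            _ ≤ α * wFun π α j :=
                mul_le_mul_of_nonneg_right (hcontr j rt hπj (x rt) (y rt)) (hwnn j)
        -- target gains α * wFun j at index rt
        have hrtmem : rt ∈ univ.filter (fun i : Fin N => (i:ℕ) < N - (r+1) ∧ x i ≠ y i) := by
          simp only [mem_filter, mem_univ, true_and]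
          exact ⟨hrtval, hxy⟩
        have hgain :
            (1 + α * ∑ j' ∈ univ.filter (fun j' : Fin N => N - r ≤ (j' : ℕ) ∧ π j' = some rt),
                wFun π α j') + α * wFun π α j
            ≤ (1 + α * ∑ j' ∈ univ.filter
                (fun j' : Fin N => N - (r+1) ≤ (j' : ℕ) ∧ π j' = some rt), wFun π α j') := by
          have hjmem : j ∉ univ.filter (fun j' : Fin N => N - r ≤ (j' : ℕ) ∧ π j' = some rt) := by
            simp only [mem_filter, mem_univ, true_and, hjval]
            rintro ⟨hc, -⟩
            omega
          have hsub : insert j (univ.filter (fun j' : Fin N => N - r ≤ (j' : ℕ) ∧ π j' = some rt))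
              ⊆ univ.filter (fun j' : Fin N => N - (r+1) ≤ (j' : ℕ) ∧ π j' = some rt) := by
            intro j' hj'
            rw [mem_insert] at hj'
            simp only [mem_filter, mem_univ, true_and]
            rcases hj' with hj' | hj'
            · rw [hj']
              exact ⟨by rw [hjval], hπj⟩
            · simp only [mem_filter, mem_univ, true_and] at hj'
              exact ⟨by omega, hj'.2⟩
          have h4 := Finset.sum_le_sum_of_subset_of_nonneg hsub (fun i _ _ => hwnn i)
          rw [Finset.sum_insert hjmem] at h4
          have h5 := mul_le_mul_of_nonneg_left h4 hα.le
          linarith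
        have hsum_split : ∀ (B : Fin N → ℝ),
            ∑ i ∈ univ.filter (fun i : Fin N => (i:ℕ) < N - (r+1) ∧ x i ≠ y i), B i
              = B rt + ∑ i ∈ (univ.filter
                  (fun i : Fin N => (i:ℕ) < N - (r+1) ∧ x i ≠ y i)).erase rt, B i :=
          fun B => (Finset.add_sum_erase _ B hrtmem).symm
        calc |(∑ a, p j x a * (Efun hN p g r (Function.update x j a)
                - Efun hN p g r (Function.update y j a)))
              + ∑ a, (p j x a - p j y a) * Efun hN p g r (Function.update y j a)|
            ≤ |∑ a, p j x a * (Efun hN p g r (Function.update x j a)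
                - Efun hN p g r (Function.update y j a))|
              + |∑ a, (p j x a - p j y a) * Efun hN p g r (Function.update y j a)| :=
              abs_add_le _ _
          _ ≤ (∑ i ∈ univ.filter (fun i : Fin N => (i:ℕ) < N - (r+1) ∧ x i ≠ y i),
                (1 + α * ∑ j' ∈ univ.filter
                    (fun j' : Fin N => N - r ≤ (j' : ℕ) ∧ π j' = some i), wFun π α j'))
              + α * wFun π α j := add_le_add hΔ1 hΔ2
          _ ≤ ∑ i ∈ univ.filter (fun i : Fin N => (i:ℕ) < N - (r+1) ∧ x i ≠ y i),
                (1 + α * ∑ j' ∈ univ.filter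
                    (fun j' : Fin N => N - (r+1) ≤ (j' : ℕ) ∧ π j' = some i), wFun π α j') := by
              rw [hsum_split (fun i => 1 + α * ∑ j' ∈ univ.filter
                  (fun j' : Fin N => N - r ≤ (j' : ℕ) ∧ π j' = some i), wFun π α j'),
                hsum_split (fun i => 1 + α * ∑ j' ∈ univ.filter
                  (fun j' : Fin N => N - (r+1) ≤ (j' : ℕ) ∧ π j' = some i), wFun π α j')]
              have herase := Finset.sum_le_sum
                (s := (univ.filter (fun i : Fin N => (i:ℕ) < N - (r+1) ∧ x i ≠ y i)).erase rt)
                (fun i _ => hB01 i)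
              linarith [hgain]

end Osc



private lemma Efun_osc_update {N : ℕ} {A : Type*} [Fintype A] [Nonempty A] [DecidableEq A]
    (hN : 0 < N)
    (π : Fin N → Option (Fin N)) (hπ : ∀ j i : Fin N, π j = some i → i < j)
    (D : ℕ)
    (houtdeg : ∀ i : Fin N, (univ.filter (fun j : Fin N => π j = some i)).card ≤ D)
    (ρ : Fin N → A → ℝ) (hρ : ∀ j, (∀ a, 0 ≤ ρ j a) ∧ ∑ a, ρ j a = 1)
    (P : Fin N → A → A → ℝ) (hP : ∀ j x, (∀ a, 0 ≤ P j x a) ∧ ∑ a, P j x a = 1)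
    (α : ℝ) (hα : 0 < α) (hαD : α * (D : ℝ) < 1)
    (hcontr : ∀ j i : Fin N, π j = some i → ∀ a a' : A, dTV (P j a) (P j a') ≤ α)
    (g : Fin N → A → ℝ) (hosc : ∀ i a a', |g i a - g i a'| ≤ 1) :
    ∀ (r : ℕ), r < N → ∀ (x : Fin N → A) (a a' : A),
      Efun hN (treeKernel π ρ P) g r (Function.update x ⟨N - (r+1), by omega⟩ a)
        - Efun hN (treeKernel π ρ P) g r (Function.update x ⟨N - (r+1), by omega⟩ a')
        ≤ 1 / (1 - α * (D : ℝ)) := by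
  have hwnn : ∀ i : Fin N, 0 ≤ wFun π α i := wFun_nonneg π α hα.le
  intro r hr x a a'
  set j : Fin N := ⟨N - (r+1), by omega⟩ with hj
  have hjval : (j : ℕ) = N - (r+1) := rfl
  have h1 := Efun_osc hN π hπ ρ hρ P hP α hα hcontr g hosc r hr.le
    (Function.update x j a) (Function.update x j a')
  have hsub : univ.filter (fun i : Fin N => (i:ℕ) < N - r
        ∧ Function.update x j a i ≠ Function.update x j a' i) ⊆ {j} := by
    intro i hi
    simp only [mem_filter, mem_univ, true_and] at hi
    rcases hi with ⟨-, hi2⟩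
    by_contra hij
    rw [mem_singleton] at hij
    rw [Function.update_of_ne hij, Function.update_of_ne hij] at hi2
    exact hi2 rfl
  have hBnn : ∀ i : Fin N,
      0 ≤ 1 + α * ∑ j' ∈ univ.filter (fun j' : Fin N => N - r ≤ (j' : ℕ) ∧ π j' = some i),
        wFun π α j' := by
    intro i
    have := Finset.sum_nonneg (f := fun j' => wFun π α j')
      (s := univ.filter (fun j' : Fin N => N - r ≤ (j' : ℕ) ∧ π j' = some i))
      (fun j' _ => hwnn j')
    nlinarith
  have h2 := Finset.sum_le_sum_of_subset_of_nonneg hsub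
    (f := fun i => 1 + α * ∑ j' ∈ univ.filter
        (fun j' : Fin N => N - r ≤ (j' : ℕ) ∧ π j' = some i), wFun π α j')
    (fun i _ _ => hBnn i)
  rw [Finset.sum_singleton] at h2
  have h3 : (1 + α * ∑ j' ∈ univ.filter
        (fun j' : Fin N => N - r ≤ (j' : ℕ) ∧ π j' = some j), wFun π α j')
      ≤ wFun π α j := by
    rw [wFun_eq π α hπ j]
    have hsub2 : univ.filter (fun j' : Fin N => N - r ≤ (j' : ℕ) ∧ π j' = some j)
        ⊆ univ.filter (fun j' : Fin N => π j' = some j) := by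
      intro j' hj'
      simp only [mem_filter, mem_univ, true_and] at hj' ⊢
      exact hj'.2
    have h4 := Finset.sum_le_sum_of_subset_of_nonneg hsub2 (fun i _ _ => hwnn i)
    have h5 := mul_le_mul_of_nonneg_left h4 hα.le
    linarith
  have h6 : wFun π α j ≤ 1 / (1 - α * (D:ℝ)) := wFun_le π α hα D houtdeg hαD j
  calc Efun hN (treeKernel π ρ P) g r (Function.update x j a)
        - Efun hN (treeKernel π ρ P) g r (Function.update x j a')
      ≤ |Efun hN (treeKernel π ρ P) g r (Function.update x j a)
        - Efun hN (treeKernel π ρ P) g r (Function.update x j a')| := le_abs_self _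
    _ ≤ _ := h1.trans (h2.trans (h3.trans h6))

/-- **Concentration on sub-critical causal trees** (Proposition 4.2): for an additive
functional `S_N = ∑ i f_i(X_i)` with coordinate oscillations at most `1`,
`ℙ(|S_N - 𝔼 S_N| ≥ t) ≤ 2 exp(-2t²(1-αD)² / N)`. -/
theorem causal_tree_concentration
    {N : ℕ} (hN : 1 ≤ N) {A : Type*} [Fintype A] [Nonempty A] [DecidableEq A]
    (π : Fin N → Option (Fin N)) (hπ : ∀ j i : Fin N, π j = some i → i < j)
    (D : ℕ) (hD : 1 ≤ D)
    (houtdeg : ∀ i : Fin N, (univ.filter (fun j : Fin N => π j = some i)).card ≤ D)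
    (ρ : Fin N → A → ℝ) (hρ : ∀ j, (∀ a, 0 ≤ ρ j a) ∧ ∑ a, ρ j a = 1)
    (P : Fin N → A → A → ℝ) (hP : ∀ j x, (∀ a, 0 ≤ P j x a) ∧ ∑ a, P j x a = 1)
    (α : ℝ) (hα : 0 < α ∧ α < 1) (hαD : α * (D : ℝ) < 1)
    (hcontr : ∀ j i : Fin N, π j = some i → ∀ a a' : A, dTV (P j a) (P j a') ≤ α)
    (g : Fin N → A → ℝ) (hosc : ∀ i a a', |g i a - g i a'| ≤ 1)
    (t : ℝ) (ht : 0 < t) :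
    ∑ x ∈ univ.filter
        (fun x : Fin N → A =>
          t ≤ |(∑ i, g i (x i)) -
            expVal (jointLaw (treeKernel π ρ P)) (fun y => ∑ i, g i (y i))|),
        jointLaw (treeKernel π ρ P) x ≤
      2 * Real.exp (-(2 * t ^ 2 * (1 - α * (D : ℝ)) ^ 2) / (N : ℝ)) := by
  classical
  have hN' : 0 < N := hN
  set p := treeKernel π ρ P with hpdef
  have hp0 : ∀ (k : Fin N) (z : Fin N → A) (a : A), 0 ≤ p k z a :=
    treeKernel_nonneg π ρ P hρ hP
  have hp1 : ∀ (k : Fin N) (z : Fin N → A), ∑ a, p k z a = 1 :=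
    treeKernel_sum π ρ P hρ hP
  have hcaus : ∀ (k : Fin N) (x y : Fin N → A), (∀ i, i < k → x i = y i) → p k x = p k y :=
    treeKernel_causal π hπ ρ P
  set c₀ : ℝ := Efun hN' p g N (Classical.arbitrary _) with hc₀def
  have hc₀ : ∀ x : Fin N → A, Efun hN' p g N x = c₀ := by
    intro x
    exact Efun_congr hN' p g hcaus N le_rfl x _ (fun i hi => absurd hi (by omega))
  have hEV : expVal (jointLaw p) (fun y => ∑ i, g i (y i)) = c₀ :=
    (Ifun_eq hN' p g hp1 hcaus c₀ hc₀).symm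
  set K1 : ℝ := 1 - α * (D : ℝ) with hK1def
  have hK1 : 0 < K1 := by simp only [hK1def]; linarith
  set Mb : ℝ := 1 / K1 with hMbdef
  have hMb : 0 ≤ Mb := by positivity
  have hoscE : ∀ (r : ℕ), r < N → ∀ (x : Fin N → A) (a a' : A),
      Efun hN' p g r (Function.update x ⟨N - (r+1), by omega⟩ a)
        - Efun hN' p g r (Function.update x ⟨N - (r+1), by omega⟩ a') ≤ Mb :=
    Efun_osc_update hN' π hπ D houtdeg ρ hρ P hP α hα.1 hαD hcontr g hosc
  have hmgf : ∀ lam : ℝ,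
      (∑ x : Fin N → A, jointLaw p x * Real.exp (lam * ((∑ i, g i (x i)) - c₀)))
        ≤ Real.exp ((N : ℝ) * (lam ^ 2 * Mb ^ 2 / 8)) := by
    intro lam
    have hT0 : Tfun hN' p g lam c₀ 0
        = ∑ x : Fin N → A, jointLaw p x * Real.exp (lam * ((∑ i, g i (x i)) - c₀)) := by
      unfold Tfun
      rw [Nat.sub_zero]
      apply Finset.sum_congr rfl
      intro x _
      rw [Pprod_univ]
      rfl
    rw [← hT0]
    exact Tfun_mgf hN' p g hp0 hp1 hcaus lam Mb c₀ hMb hc₀ hoscE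
  have hQ0 : ∀ x : Fin N → A, 0 ≤ jointLaw p x :=
    fun x => Finset.prod_nonneg fun k _ => hp0 k x (x k)
  set lam : ℝ := 4 * t * K1 ^ 2 / N with hlamdef
  have hlam : 0 < lam := by positivity
  have hexpo : ∀ lam' : ℝ, lam' ^ 2 = lam ^ 2 →
      -(lam * t) + (N : ℝ) * (lam' ^ 2 * Mb ^ 2 / 8) = -(2 * t ^ 2 * K1 ^ 2) / N := by
    intro lam' hsq
    rw [hsq, hlamdef, hMbdef]
    have hNne : (N : ℝ) ≠ 0 := by positivity
    field_simp
    ring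
  have tail : ∀ lam' : ℝ, lam' ^ 2 = lam ^ 2 →
      ∀ s : Finset (Fin N → A),
      (∀ x ∈ s, 0 ≤ lam' * ((∑ i, g i (x i)) - c₀) - lam * t) →
      ∑ x ∈ s, jointLaw p x ≤ Real.exp (-(2 * t ^ 2 * K1 ^ 2) / N) := by
    intro lam' hsq s hs
    calc ∑ x ∈ s, jointLaw p x
        ≤ ∑ x ∈ s, jointLaw p x
            * Real.exp (lam' * ((∑ i, g i (x i)) - c₀) - lam * t) := by
          apply Finset.sum_le_sum
          intro x hx
          exact le_mul_of_one_le_right (hQ0 x) (Real.one_le_exp (hs x hx))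
      _ ≤ ∑ x : Fin N → A, jointLaw p x
            * Real.exp (lam' * ((∑ i, g i (x i)) - c₀) - lam * t) := by
          apply Finset.sum_le_sum_of_subset_of_nonneg (Finset.subset_univ s)
          intro x _ _
          exact mul_nonneg (hQ0 x) (Real.exp_pos _).le
      _ = Real.exp (-(lam * t)) * ∑ x : Fin N → A, jointLaw p x
            * Real.exp (lam' * ((∑ i, g i (x i)) - c₀)) := by
          rw [Finset.mul_sum]
          apply Finset.sum_congr rfl
          intro x _
          rw [show lam' * ((∑ i, g i (x i)) - c₀) - lam * t
              = -(lam * t) + lam' * ((∑ i, g i (x i)) - c₀) by ring, Real.exp_add]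
          ring
      _ ≤ Real.exp (-(lam * t)) * Real.exp ((N : ℝ) * (lam' ^ 2 * Mb ^ 2 / 8)) :=
          mul_le_mul_of_nonneg_left (hmgf lam') (Real.exp_pos _).le
      _ = Real.exp (-(2 * t ^ 2 * K1 ^ 2) / N) := by
          rw [← Real.exp_add, hexpo lam' hsq]
  rw [hEV]
  set s1 : Finset (Fin N → A) :=
    univ.filter (fun x : Fin N → A => t ≤ (∑ i, g i (x i)) - c₀) with hs1def
  set s2 : Finset (Fin N → A) :=
    univ.filter (fun x : Fin N → A => t ≤ c₀ - (∑ i, g i (x i))) with hs2def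
  have hsub : univ.filter
      (fun x : Fin N → A => t ≤ |(∑ i, g i (x i)) - c₀|) ⊆ s1 ∪ s2 := by
    intro x hx
    simp only [mem_filter, mem_univ, true_and] at hx
    rw [Finset.mem_union, hs1def, hs2def]
    simp only [mem_filter, mem_univ, true_and]
    rcases le_abs.1 hx with h | h
    · exact Or.inl h
    · exact Or.inr (by linarith)
  have hdis : Disjoint s1 s2 := by
    rw [Finset.disjoint_left]
    intro x hx1 hx2
    rw [hs1def] at hx1
    rw [hs2def] at hx2
    simp only [mem_filter, mem_univ, true_and] at hx1 hx2
    linarith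
  have hb1 : ∑ x ∈ s1, jointLaw p x ≤ Real.exp (-(2 * t ^ 2 * K1 ^ 2) / N) := by
    apply tail lam rfl
    intro x hx
    rw [hs1def] at hx
    simp only [mem_filter, mem_univ, true_and] at hx
    have : lam * t ≤ lam * ((∑ i, g i (x i)) - c₀) :=
      mul_le_mul_of_nonneg_left hx hlam.le
    linarith
  have hb2 : ∑ x ∈ s2, jointLaw p x ≤ Real.exp (-(2 * t ^ 2 * K1 ^ 2) / N) := by
    apply tail (-lam) (by ring)
    intro x hx
    rw [hs2def] at hx
    simp only [mem_filter, mem_univ, true_and] at hx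
    have : lam * t ≤ lam * (c₀ - (∑ i, g i (x i))) :=
      mul_le_mul_of_nonneg_left hx hlam.le
    nlinarith
  have hfin : (-(2 * t ^ 2 * K1 ^ 2) / N : ℝ)
      = -(2 * t ^ 2 * (1 - α * (D : ℝ)) ^ 2) / (N : ℝ) := by rw [hK1def]
  calc ∑ x ∈ univ.filter
        (fun x : Fin N → A => t ≤ |(∑ i, g i (x i)) - c₀|), jointLaw p x
      ≤ ∑ x ∈ s1 ∪ s2, jointLaw p x :=
        Finset.sum_le_sum_of_subset_of_nonneg hsub (fun x _ _ => hQ0 x)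
    _ = ∑ x ∈ s1, jointLaw p x + ∑ x ∈ s2, jointLaw p x := Finset.sum_union hdis
    _ ≤ Real.exp (-(2 * t ^ 2 * K1 ^ 2) / N) + Real.exp (-(2 * t ^ 2 * K1 ^ 2) / N) :=
        add_le_add hb1 hb2
    _ = 2 * Real.exp (-(2 * t ^ 2 * (1 - α * (D : ℝ)) ^ 2) / (N : ℝ)) := by
        rw [hfin]; ring
end
end

section
/- Let H ∈ ℝ^{N×N} be entry-wise nonnegative with H_{i,j} = 0 unless i = π(j) (j a non-root node with parent π(j) < j), and H_{π(j),j} ≤ α for some α ∈ (0,1). Let d(i,j) denote the directed path length from i to j in the forest when i is equal to or an ancestor of j. Then the resolvent Γ = (I − H)^{−1} satisfies: Γ_{i,j} ≤ α^{d(i,j)} when i equals j or i is an ancestor of j, and Γ_{i,j} = 0 otherwise. -/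
open Finset

noncomputable section

/-- `parentIter π r j` is the `r`-fold iterate of the parent map `π` starting at `j`
(`none` if a root is passed on the way). `parentIter π r j = some i` means that `i` is
the `r`-th ancestor of `j` (with `parentIter π 0 j = some j`). -/
def parentIter {N : ℕ} (π : Fin N → Option (Fin N)) : ℕ → Fin N → Option (Fin N)
  | 0, j => some j
  | r + 1, j => (π j).bind (parentIter π r)

/-- **Resolvent of a causal tree** (Section 4.2): if the nonnegative matrix `H` is supported
on parent-child pairs with entries at most `α`, then `Γ = (I - H)⁻¹` satisfies
`Γ i j ≤ α^{d(i,j)}` when `i` is `j` or an ancestor of `j` at directed distance `d(i,j)`,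
and `Γ i j = 0` otherwise. -/
theorem causal_tree_resolvent_bound
    {N : ℕ} (π : Fin N → Option (Fin N)) (hπ : ∀ j i : Fin N, π j = some i → i < j)
    (α : ℝ) (hα : 0 < α ∧ α < 1)
    (H : Matrix (Fin N) (Fin N) ℝ) (hnn : ∀ i j, 0 ≤ H i j)
    (hsupp : ∀ i j : Fin N, π j ≠ some i → H i j = 0)
    (hbd : ∀ i j : Fin N, π j = some i → H i j ≤ α) :
    (∀ i j : Fin N, ∀ r : ℕ, parentIter π r j = some i → (1 - H)⁻¹ i j ≤ α ^ r) ∧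
      (∀ i j : Fin N, (∀ r : ℕ, parentIter π r j ≠ some i) → (1 - H)⁻¹ i j = 0) := by
  obtain ⟨hα0, hα1⟩ := hα
  -- value bound along the ancestor chain
  have hval : ∀ r : ℕ, ∀ j i : Fin N, parentIter π r j = some i → (i : ℕ) + r ≤ j := by
    intro r
    induction r with
    | zero =>
      intro j i h
      simp only [parentIter, Option.some.injEq] at h
      subst h; omega
    | succ r ih =>
      intro j i h
      simp only [parentIter] at h
      rw [Option.bind_eq_some_iff] at h
      obtain ⟨k, hk, hk2⟩ := h
      have h1 : k < j := hπ j k hk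
      have h2 := ih k i hk2
      have : (k : ℕ) < j := h1
      omega
  -- composition of iterates
  have hcomp : ∀ a b : ℕ, ∀ j : Fin N,
      parentIter π (a + b) j = (parentIter π a j).bind (parentIter π b) := by
    intro a
    induction a with
    | zero => intro b j; simp [parentIter]
    | succ a ih =>
      intro b j
      have heq : a + 1 + b = (a + b) + 1 := by omega
      rw [heq]
      simp only [parentIter]
      cases hpj : π j with
      | none => simp
      | some k => simpa using ih b k
  -- uniqueness of the ancestor distance
  have huniq : ∀ r s : ℕ, ∀ j i : Fin N,
      parentIter π r j = some i → parentIter π s j = some i → r = s := by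
    have aux : ∀ r s : ℕ, r ≤ s → ∀ j i : Fin N,
        parentIter π r j = some i → parentIter π s j = some i → r = s := by
      intro r s hle j i h1 h2
      obtain ⟨t, rfl⟩ := Nat.exists_eq_add_of_le hle
      rw [hcomp r t j, h1] at h2
      simp only [Option.bind_eq_some_iff, Option.some.injEq] at h2
      have := hval t i i (by simpa using h2)
      omega
    intro r s j i h1 h2
    rcases le_total r s with hle | hle
    · exact aux r s hle j i h1 h2
    · exact (aux s r hle j i h2 h1).symm
  -- nonnegativity of powers
  have hpnn : ∀ r : ℕ, ∀ i j : Fin N, 0 ≤ (H ^ r) i j := by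
    intro r
    induction r with
    | zero =>
      intro i j
      rw [pow_zero, Matrix.one_apply]
      split <;> norm_num
    | succ r ih =>
      intro i j
      rw [pow_succ, Matrix.mul_apply]
      exact Finset.sum_nonneg fun k _ => mul_nonneg (ih i k) (hnn k j)
  -- support of powers
  have hpsupp : ∀ r : ℕ, ∀ j i : Fin N, parentIter π r j ≠ some i → (H ^ r) i j = 0 := by
    intro r
    induction r with
    | zero =>
      intro j i h
      simp only [parentIter, ne_eq, Option.some.injEq] at h
      rw [pow_zero, Matrix.one_apply_ne (fun hij => h hij.symm)]
    | succ r ih =>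
      intro j i h
      rw [pow_succ, Matrix.mul_apply]
      apply Finset.sum_eq_zero
      intro k _
      by_cases hk : π j = some k
      · have hne : parentIter π r k ≠ some i := by
          intro hc
          apply h
          simp [parentIter, hk, hc]
        rw [ih k i hne, zero_mul]
      · rw [hsupp k j hk, mul_zero]
  -- bound on powers
  have hpbd : ∀ r : ℕ, ∀ j i : Fin N, parentIter π r j = some i → (H ^ r) i j ≤ α ^ r := by
    intro r
    induction r with
    | zero =>
      intro j i h
      simp only [parentIter, Option.some.injEq] at h
      subst h
      simp [Matrix.one_apply]
    | succ r ih =>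
      intro j i h
      simp only [parentIter] at h
      rw [Option.bind_eq_some_iff] at h
      obtain ⟨k, hk, hk2⟩ := h
      rw [pow_succ, Matrix.mul_apply]
      have hsum : ∑ m, (H ^ r) i m * H m j = (H ^ r) i k * H k j := by
        apply Finset.sum_eq_single k
        · intro m _ hm
          have : π j ≠ some m := by
            rw [hk]; intro hc; exact hm (Option.some.inj hc.symm)
          rw [hsupp m j this, mul_zero]
        · intro hkk; exact absurd (Finset.mem_univ k) hkk
      rw [hsum]
      exact mul_le_mul (ih k i hk2) (hbd k j hk) (hnn k j) (pow_nonneg hα0.le r)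
  -- nilpotency
  have hHN : H ^ N = 0 := by
    ext i j
    rw [Matrix.zero_apply]
    apply hpsupp N j i
    intro hc
    have := hval N j i hc
    have := j.isLt
    omega
  -- the inverse as a geometric sum
  have hS : (1 - H) * (∑ r ∈ range N, H ^ r) = 1 := by
    have h := mul_geom_sum H N
    rw [hHN] at h
    have h2 : (1 - H) * (∑ r ∈ range N, H ^ r) = -((H - 1) * ∑ r ∈ range N, H ^ r) := by
      rw [← neg_sub, neg_mul]
    rw [h2, h, zero_sub, neg_neg]
  have hinv : (1 - H)⁻¹ = ∑ r ∈ range N, H ^ r := Matrix.inv_eq_right_inv hS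
  constructor
  · intro i j r hr
    have hrN : r < N := by
      have := hval r j i hr
      have := j.isLt
      omega
    rw [hinv, Matrix.sum_apply]
    rw [Finset.sum_eq_single r]
    · exact hpbd r j i hr
    · intro s _ hs
      exact hpsupp s j i fun hc => hs (huniq s r j i hc hr)
    · intro hmem
      exact absurd (Finset.mem_range.mpr hrN) hmem
  · intro i j h
    rw [hinv, Matrix.sum_apply]
    exact Finset.sum_eq_zero fun r _ => hpsupp r j i (h r)
end
end

section
/- Let H ∈ ℝ^{N×N} be entry-wise nonnegative with H_{i,j} = 0 unless i = π(j), and H_{π(j),j} ≤ α, where the directed forest has maximum out-degree at most D ≥ 1 and αD < 1. Then every row sum of the resolvent satisfies (Γ·1_N)_i = Σ_{j=1}^N Γ_{i,j} ≤ 1/(1 − αD), and consequently the squared Euclidean norm satisfies ‖Γ·1_N‖₂² ≤ N/(1 − αD)². -/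
open Finset

noncomputable section

/-- **Row sums of the causal tree resolvent** (proof of Proposition 4.2): if the nonnegative
matrix `H` is supported on parent-child pairs with entries at most `α`, the forest has
out-degree at most `D` and `αD < 1`, then every row sum of `Γ = (I - H)⁻¹` is at most
`1/(1 - αD)` and hence `‖Γ·1‖₂² ≤ N/(1 - αD)²`. -/
theorem causal_tree_resolvent_row_sums
    {N : ℕ} (π : Fin N → Option (Fin N)) (hπ : ∀ j i : Fin N, π j = some i → i < j)
    (D : ℕ) (hD : 1 ≤ D)
    (houtdeg : ∀ i : Fin N, (univ.filter (fun j : Fin N => π j = some i)).card ≤ D)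
    (α : ℝ) (hα : 0 < α ∧ α < 1) (hαD : α * (D : ℝ) < 1)
    (H : Matrix (Fin N) (Fin N) ℝ) (hnn : ∀ i j, 0 ≤ H i j)
    (hsupp : ∀ i j : Fin N, π j ≠ some i → H i j = 0)
    (hbd : ∀ i j : Fin N, π j = some i → H i j ≤ α) :
    (∀ i : Fin N, ∑ j, (1 - H)⁻¹ i j ≤ 1 / (1 - α * (D : ℝ))) ∧
      ∑ i, ((1 - H)⁻¹.mulVec (fun _ => (1 : ℝ)) i) ^ 2 ≤
        (N : ℝ) / (1 - α * (D : ℝ)) ^ 2 := by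
  obtain ⟨hα0, hα1⟩ := hα
  have hden : 0 < 1 - α * (D : ℝ) := by linarith
  set c : ℝ := 1 / (1 - α * (D : ℝ)) with hc
  have hc0 : 0 < c := by positivity
  have hcEq : c = 1 + α * (D : ℝ) * c := by
    rw [hc]; field_simp; ring
  -- strict upper triangularity of H
  have htri : ∀ i j : Fin N, ¬ i < j → H i j = 0 := by
    intro i j h
    apply hsupp
    intro hpi
    exact h (hπ j i hpi)
  have hHdiag : ∀ i : Fin N, H i i = 0 := fun i => htri i i (lt_irrefl i)
  have hdet : IsUnit (1 - H).det := by
    have hBT : (1 - H).BlockTriangular id := by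
      intro i j hij
      simp only [id] at hij
      have h1 : (1 : Matrix (Fin N) (Fin N) ℝ) i j = 0 :=
        Matrix.one_apply_ne (Ne.symm (ne_of_lt hij))
      have h2 : H i j = 0 := htri i j (fun h => absurd (lt_trans h hij) (lt_irrefl i))
      simp [Matrix.sub_apply, h1, h2]
    have : (1 - H).det = 1 := by
      rw [Matrix.det_of_upperTriangular hBT]
      apply Finset.prod_eq_one
      intro i _
      simp [Matrix.sub_apply, hHdiag i, Matrix.one_apply]
    rw [this]; exact isUnit_one
  set Γ : Matrix (Fin N) (Fin N) ℝ := (1 - H)⁻¹ with hΓ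
  have hmul : (1 - H) * Γ = 1 := Matrix.mul_nonsing_inv _ hdet
  have hentry : ∀ i j : Fin N, Γ i j =
      (if i = j then (1 : ℝ) else 0) + ∑ k, H i k * Γ k j := by
    intro i j
    have h := congrFun (congrFun hmul i) j
    rw [Matrix.mul_apply] at h
    have hsplit : ∑ k, (1 - H) i k * Γ k j
        = (∑ k, (1 : Matrix (Fin N) (Fin N) ℝ) i k * Γ k j) - ∑ k, H i k * Γ k j := by
      rw [← Finset.sum_sub_distrib]
      apply Finset.sum_congr rfl
      intro k _
      simp [Matrix.sub_apply, sub_mul]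
    rw [hsplit] at h
    have h1 : ∑ k, (1 : Matrix (Fin N) (Fin N) ℝ) i k * Γ k j = Γ i j := by
      simp [Matrix.one_apply]
    rw [h1] at h
    have h2 : (1 : Matrix (Fin N) (Fin N) ℝ) i j = if i = j then (1 : ℝ) else 0 := by
      simp [Matrix.one_apply]
    rw [h2] at h
    linarith
  set s : Fin N → ℝ := fun i => ∑ j, Γ i j with hs
  have hs_eq : ∀ i : Fin N, s i = 1 + ∑ k, H i k * s k := by
    intro i
    have : s i = ∑ j, ((if i = j then (1 : ℝ) else 0) + ∑ k, H i k * Γ k j) := by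
      apply Finset.sum_congr rfl
      intro j _
      exact hentry i j
    rw [this, Finset.sum_add_distrib, Finset.sum_ite_eq univ i (fun _ => (1 : ℝ))]
    simp only [Finset.mem_univ, if_true]
    congr 1
    rw [Finset.sum_comm]
    apply Finset.sum_congr rfl
    intro k _
    rw [← Finset.mul_sum]
  have main : ∀ m : ℕ, ∀ i : Fin N, N - i.val ≤ m → 0 ≤ s i ∧ s i ≤ c := by
    intro m
    induction m with
    | zero =>
      intro i hi
      exact absurd hi (by have := i.isLt; omega)
    | succ m ih =>
      intro i hi
      have hchild : ∀ k : Fin N, π k = some i → 0 ≤ s k ∧ s k ≤ c := by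
        intro k hk
        have hik : i < k := hπ k i hk
        exact ih k (by have := k.isLt; have := Fin.lt_iff_val_lt_val.mp hik; omega)
      have hfil : ∑ k, H i k * s k
          = ∑ k ∈ univ.filter (fun k : Fin N => π k = some i), H i k * s k := by
        symm
        apply Finset.sum_subset (Finset.filter_subset _ _)
        intro k _ hk
        simp only [Finset.mem_filter, Finset.mem_univ, true_and] at hk
        rw [hsupp i k hk, zero_mul]
      have hnn_sum : 0 ≤ ∑ k, H i k * s k := by
        rw [hfil]
        apply Finset.sum_nonneg
        intro k hk
        simp only [Finset.mem_filter, Finset.mem_univ, true_and] at hk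
        exact mul_nonneg (hnn i k) (hchild k hk).1
      have hub : ∑ k, H i k * s k ≤ α * (D : ℝ) * c := by
        rw [hfil]
        calc ∑ k ∈ univ.filter (fun k : Fin N => π k = some i), H i k * s k
            ≤ ∑ _k ∈ univ.filter (fun k : Fin N => π k = some i), α * c := by
              apply Finset.sum_le_sum
              intro k hk
              simp only [Finset.mem_filter, Finset.mem_univ, true_and] at hk
              exact mul_le_mul (hbd i k hk) (hchild k hk).2 (hchild k hk).1 hα0.le
          _ = ((univ.filter (fun k : Fin N => π k = some i)).card : ℝ) * (α * c) := by
              rw [Finset.sum_const, nsmul_eq_mul]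
          _ ≤ (D : ℝ) * (α * c) := by
              apply mul_le_mul_of_nonneg_right _ (by positivity)
              exact_mod_cast houtdeg i
          _ = α * (D : ℝ) * c := by ring
      constructor
      · rw [hs_eq]; linarith
      · rw [hs_eq]; linarith [hcEq]
  have hrow : ∀ i : Fin N, 0 ≤ s i ∧ s i ≤ c := fun i => main N i (by omega)
  constructor
  · intro i
    exact (hrow i).2
  · have hmv : ∀ i : Fin N, Γ.mulVec (fun _ => (1 : ℝ)) i = s i := by
      intro i
      simp [Matrix.mulVec, dotProduct, hs]
    calc ∑ i, (Γ.mulVec (fun _ => (1 : ℝ)) i) ^ 2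
        ≤ ∑ _i : Fin N, c ^ 2 := by
          apply Finset.sum_le_sum
          intro i _
          rw [hmv i]
          exact pow_le_pow_left₀ (hrow i).1 (hrow i).2 2
      _ = (N : ℝ) * c ^ 2 := by rw [Finset.sum_const, nsmul_eq_mul]; simp
      _ = (N : ℝ) / (1 - α * (D : ℝ)) ^ 2 := by
          rw [hc]; field_simp
end
end

section
/- Let H ∈ ℝ^{N×N} be entry-wise nonnegative and strictly upper triangular, fix k ∈ {1,…,N}, and let v ∈ ℝ^N be entry-wise nonnegative with v_m = 0 for m < k, v_k = 1, and v_j ≤ Σ_{m=k}^{j−1} H_{m,j}·v_m for every j > k. Then v ≤ Γ^T e_k entry-wise, i.e. v_j ≤ Γ_{k,j} for every j, where e_k is the k-th standard basis vector. -/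
/-!
Write `Γ = (I - H)⁻¹`. The row `w = e_kᵀ Γ` solves `w = e_k + w H` exactly, while the hypotheses
say that `v` is a sub-solution, `v ≤ e_k + v H`. Hence `d = v - w` satisfies `d ≤ d H`, and since
`H` is nonnegative and strictly upper triangular, `d_j ≤ ∑_{m < j} d_m H_{m,j}`, so `d ≤ 0` by strong
induction on `j`.
-/

open Finset Matrix

noncomputable section

namespace Matrix

variable {ι R : Type*} [LinearOrder ι]

theorem isUpperTriangular_one_sub [Ring R] {H : Matrix ι ι R}
    (hut : ∀ i j, j ≤ i → H i j = 0) : (1 - H).IsUpperTriangular := by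
  intro i j (hji : j < i)
  rw [sub_apply, one_apply_ne hji.ne', hut i j hji.le, sub_zero]

variable [Fintype ι]

theorem det_one_sub_eq_one [CommRing R] {H : Matrix ι ι R} (hut : ∀ i j, j ≤ i → H i j = 0) :
    (1 - H).det = 1 := by
  rw [det_of_isUpperTriangular (isUpperTriangular_one_sub hut)]
  exact prod_eq_one fun i _ => by simp [hut i i le_rfl]

theorem vecMul_inv_one_sub [CommRing R] {H : Matrix ι ι R} (hut : ∀ i j, j ≤ i → H i j = 0)
    (u : ι → R) : u ᵥ* (1 - H)⁻¹ = u + u ᵥ* (1 - H)⁻¹ ᵥ* H := by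
  have hinv : (1 - H)⁻¹ * (1 - H) = 1 :=
    nonsing_inv_mul _ (by rw [det_one_sub_eq_one hut]; exact isUnit_one)
  have := congrArg (u ᵥ* ·) hinv
  simp only [← vecMul_vecMul, vecMul_one, vecMul_sub] at this
  exact eq_add_of_sub_eq this

theorem nonpos_of_le_vecMul [Semiring R] [PartialOrder R] [IsOrderedRing R] {H : Matrix ι ι R}
    (hnn : ∀ i j, 0 ≤ H i j) (hut : ∀ i j, j ≤ i → H i j = 0) {d : ι → R} (hd : d ≤ d ᵥ* H) :
    d ≤ 0 := by
  intro j
  induction j using WellFoundedLT.induction with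
  | _ j ih =>
    refine (hd j).trans (sum_nonpos fun m _ => ?_)
    rcases lt_or_ge m j with hmj | hjm
    · exact mul_nonpos_of_nonpos_of_nonneg (ih m hmj) (hnn m j)
    · simp [hut m j hjm]

theorem le_vecMul_inv_one_sub [CommRing R] [PartialOrder R] [IsOrderedRing R]
    {H : Matrix ι ι R} (hnn : ∀ i j, 0 ≤ H i j) (hut : ∀ i j, j ≤ i → H i j = 0)
    {u v : ι → R} (hv : v ≤ u + v ᵥ* H) : v ≤ u ᵥ* (1 - H)⁻¹ := by
  have hsol := vecMul_inv_one_sub hut u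
  have hdiff : v - u ᵥ* (1 - H)⁻¹ ≤ (v - u ᵥ* (1 - H)⁻¹) ᵥ* H :=
    calc v - u ᵥ* (1 - H)⁻¹ = v - (u + u ᵥ* (1 - H)⁻¹ ᵥ* H) := by rw [← hsol]
      _ ≤ u + v ᵥ* H - (u + u ᵥ* (1 - H)⁻¹ ᵥ* H) := sub_le_sub_right hv _
      _ = (v - u ᵥ* (1 - H)⁻¹) ᵥ* H := by rw [sub_vecMul]; abel
  simpa using nonpos_of_le_vecMul hnn hut hdiff

theorem le_single_add_vecMul [CommSemiring R] [Preorder R] {H : Matrix ι ι R}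
    (hut : ∀ i j, j ≤ i → H i j = 0) {k : ι} {v : ι → R}
    (hvlt : ∀ m, m < k → v m = 0) (hvk : v k = 1)
    (hrec : ∀ j, k < j → v j ≤ ∑ m ∈ univ.filter (fun m => k ≤ m ∧ m < j), H m j * v m) :
    v ≤ Pi.single k 1 + v ᵥ* H := by
  have hvecMul : ∀ j, (v ᵥ* H) j = ∑ m ∈ univ.filter (fun m => k ≤ m ∧ m < j), H m j * v m := by
    intro j
    simp only [vecMul, dotProduct, sum_filter]
    refine sum_congr rfl fun m _ => ?_
    split_ifs with hm
    · exact mul_comm _ _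
    · rcases lt_or_ge m k with hmk | hkm
      · simp [hvlt m hmk]
      · simp [hut m j (not_lt.mp fun hmj => hm ⟨hkm, hmj⟩)]
  have hvecMul_eq_zero : ∀ j, j ≤ k → (v ᵥ* H) j = 0 := fun j hjk => by
    rw [hvecMul]
    exact sum_eq_zero fun m hm => absurd ((mem_filter.mp hm).2.1.trans_lt (mem_filter.mp hm).2.2)
      hjk.not_gt
  intro j
  rcases lt_trichotomy j k with hjk | rfl | hkj
  · simp [hvlt j hjk, hvecMul_eq_zero j hjk.le, hjk.ne]
  · simp [hvk, hvecMul_eq_zero j le_rfl]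
  · simpa [hkj.ne', hvecMul] using hrec j hkj

end Matrix

theorem discrepancy_vector_le_resolvent_general
    {N : ℕ} (H : Matrix (Fin N) (Fin N) ℝ)
    (hnn : ∀ i j, 0 ≤ H i j) (hut : ∀ i j : Fin N, j ≤ i → H i j = 0)
    (k : Fin N) (v : Fin N → ℝ)
    (hvlt : ∀ m : Fin N, m < k → v m = 0)
    (hvk : v k = 1)
    (hrec : ∀ j : Fin N, k < j →
      v j ≤ ∑ m ∈ univ.filter (fun m : Fin N => k ≤ m ∧ m < j), H m j * v m) :
    ∀ j : Fin N, v j ≤ (1 - H)⁻¹ k j := by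
  have hle := le_vecMul_inv_one_sub hnn hut (le_single_add_vecMul hut hvlt hvk hrec)
  rwa [single_one_vecMul] at hle

/-- **Discrepancy vector domination** (proof of Theorem 3.1, Step 3): if the entry-wise
nonnegative vector `v` satisfies `v_m = 0` for `m < k`, `v_k = 1` and the recursion
`v_j ≤ ∑_{k ≤ m < j} H_{m,j} v_m` for `j > k`, then `v ≤ Γᵀ e_k` entry-wise, i.e.
`v_j ≤ Γ_{k,j}` for every `j`, where `Γ = (I - H)⁻¹`. -/
theorem discrepancy_vector_le_resolvent
    {N : ℕ} (H : Matrix (Fin N) (Fin N) ℝ)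
    (hnn : ∀ i j, 0 ≤ H i j) (hut : ∀ i j : Fin N, j ≤ i → H i j = 0)
    (k : Fin N) (v : Fin N → ℝ)
    (hv0 : ∀ m, 0 ≤ v m)
    (hvlt : ∀ m : Fin N, m < k → v m = 0)
    (hvk : v k = 1)
    (hrec : ∀ j : Fin N, k < j →
      v j ≤ ∑ m ∈ univ.filter (fun m : Fin N => k ≤ m ∧ m < j), H m j * v m) :
    ∀ j : Fin N, v j ≤ (1 - H)⁻¹ k j :=
  discrepancy_vector_le_resolvent_general H hnn hut k v hvlt hvk hrec
end
end

section
/- For each k ∈ {1,…,N} and u ∈ 𝒜^k define F_k(u) := Σ_{x_{k+1:N} ∈ 𝒜^{N−k}} f(u, x_{k+1:N})·∏_{j=k+1}^N p_j(x_j | u, x_{k+1:j−1}), the conditional expectation of f(X) given X_{1:k} = u. Then for every prefix z ∈ 𝒜^{k−1} and all a, a' ∈ 𝒜: |F_k(z,a) − F_k(z,a')| ≤ (Γc)_k, the k-th entry of the matrix-vector product Γc. -/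
open Finset

noncomputable section

/-- `condExpF p f k u` is `F_k(u)`, the conditional expectation of `f(X)` given that the
first `k` coordinates agree with `u`:
`F_k(u) = ∑_{x_{k+1:N}} f(u, x_{k+1:N}) ∏_{j>k} p_j(x_j | u, x_{k+1:j-1})`. -/
def condExpF {N : ℕ} {A : Type*} [Fintype A] [DecidableEq A]
    (p : Fin N → (Fin N → A) → A → ℝ) (f : (Fin N → A) → ℝ)
    (k : ℕ) (u : Fin N → A) : ℝ :=
  ∑ x ∈ univ.filter (fun x : Fin N → A => ∀ i : Fin N, (i : ℕ) < k → x i = u i),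
    f x * ∏ j ∈ univ.filter (fun j : Fin N => k ≤ (j : ℕ)), p j x (x j)

section Aux
variable {N : ℕ} {A : Type*} [Fintype A] [DecidableEq A] [Nonempty A]

set_option linter.unusedSectionVars false
set_option linter.unusedVariables false

lemma dTV_nonneg (μ ν : A → ℝ) : 0 ≤ dTV μ ν := by
  unfold dTV; positivity

lemma dTV_le_one {p : Fin N → (Fin N → A) → A → ℝ} (hp : IsCausalKernel p)
    (j : Fin N) (x y : Fin N → A) : dTV (p j x) (p j y) ≤ 1 := by
  unfold dTV
  rw [div_le_one (by norm_num)]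
  calc ∑ a, |p j x a - p j y a| ≤ ∑ a, (p j x a + p j y a) := by
        refine Finset.sum_le_sum fun a _ => ?_
        rw [abs_sub_le_iff]
        constructor <;> nlinarith [hp.1 j x a, hp.1 j y a]
    _ = 2 := by rw [Finset.sum_add_distrib, hp.2.1 j x, hp.2.1 j y]; norm_num

lemma bddAbove_dTV {p : Fin N → (Fin N → A) → A → ℝ} (hp : IsCausalKernel p) (j : Fin N)
    {ι : Sort*} (q : ι → (Fin N → A) × (Fin N → A)) :
    BddAbove (Set.range fun i => dTV (p j (q i).1) (p j (q i).2)) := by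
  refine ⟨1, ?_⟩
  rintro _ ⟨i, rfl⟩
  exact dTV_le_one hp j _ _

lemma Hmat_nonneg {p : Fin N → (Fin N → A) → A → ℝ} (hp : IsCausalKernel p) (i j : Fin N) :
    0 ≤ Hmat p i j := by
  unfold Hmat
  split
  · exact Real.iSup_nonneg fun q => dTV_nonneg _ _
  · exact le_refl 0

lemma dTV_le_Hmat {p : Fin N → (Fin N → A) → A → ℝ} (hp : IsCausalKernel p)
    {i j : Fin N} (hij : i < j) (u u' : Fin N → A)
    (h : ∀ l, l ≠ i → u l = u' l) : dTV (p j u) (p j u') ≤ Hmat p i j := by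
  unfold Hmat
  rw [if_pos hij]
  exact le_ciSup (f := fun q : {q : (Fin N → A) × (Fin N → A) // ∀ m, m < j → m ≠ i → q.1 m = q.2 m} => dTV (p j q.1.1) (p j q.1.2))
    (bddAbove_dTV hp j _) ⟨(u, u'), fun m _ hmi => h m hmi⟩

lemma condExpF_congr (p : Fin N → (Fin N → A) → A → ℝ) (f : (Fin N → A) → ℝ)
    (k : ℕ) (u v : Fin N → A) (h : ∀ i : Fin N, (i : ℕ) < k → u i = v i) :
    condExpF p f k u = condExpF p f k v := by
  unfold condExpF
  apply Finset.sum_congr _ fun _ _ => rfl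
  ext x
  simp only [mem_filter, mem_univ, true_and]
  constructor
  · intro hx i hi; rw [hx i hi, h i hi]
  · intro hx i hi; rw [hx i hi, h i hi]

lemma condExpF_at_N (p : Fin N → (Fin N → A) → A → ℝ) (f : (Fin N → A) → ℝ)
    (u : Fin N → A) : condExpF p f N u = f u := by
  unfold condExpF
  have h1 : (univ.filter (fun j : Fin N => N ≤ (j : ℕ))) = ∅ := by
    ext j; simp [Nat.not_le.2 j.isLt]
  have h2 : (univ.filter (fun x : Fin N → A => ∀ i : Fin N, (i : ℕ) < N → x i = u i)) = {u} := by
    ext x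
    simp only [mem_filter, mem_univ, true_and, mem_singleton]
    constructor
    · intro hx; funext i; exact hx i i.isLt
    · rintro rfl; intro i _; rfl
  rw [h1, h2]
  simp

lemma condExpF_succ {p : Fin N → (Fin N → A) → A → ℝ} (hp : IsCausalKernel p)
    (f : (Fin N → A) → ℝ) (m : Fin N) (u : Fin N → A) :
    condExpF p f (m : ℕ) u =
      ∑ b, p m u b * condExpF p f ((m : ℕ) + 1) (Function.update u m b) := by
  unfold condExpF
  rw [← Finset.sum_fiberwise_of_maps_to (g := fun x : Fin N → A => x m)
    (fun x _ => mem_univ (x m))]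
  apply Finset.sum_congr rfl
  intro b _
  have hset : ((univ.filter (fun x : Fin N → A => ∀ i : Fin N, (i : ℕ) < (m:ℕ) → x i = u i)).filter
      (fun x => x m = b)) =
      univ.filter (fun x : Fin N → A => ∀ i : Fin N, (i : ℕ) < (m:ℕ) + 1 → x i = Function.update u m b i) := by
    ext x
    simp only [mem_filter, mem_univ, true_and]
    constructor
    · rintro ⟨hx, hb⟩ i hi
      rcases Nat.lt_succ_iff_lt_or_eq.1 hi with hi' | hi'
      · rw [hx i hi', Function.update_of_ne (by exact fun h => absurd (congrArg Fin.val h) (Nat.ne_of_lt hi')) _ _]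
      · have : i = m := Fin.ext hi'
        subst this
        rw [Function.update_self]; exact hb
    · intro hx
      constructor
      · intro i hi
        have := hx i (Nat.lt_succ_of_lt hi)
        rwa [Function.update_of_ne (fun h => absurd (congrArg Fin.val h) (Nat.ne_of_lt hi)) _ _] at this
      · have := hx m (Nat.lt_succ_self _)
        rwa [Function.update_self] at this
  rw [hset, Finset.mul_sum]
  apply Finset.sum_congr rfl
  intro x hx
  simp only [mem_filter, mem_univ, true_and] at hx
  have hxm : x m = b := by have := hx m (Nat.lt_succ_self _); rwa [Function.update_self] at this
  have hprod : (univ.filter (fun j : Fin N => (m:ℕ) ≤ (j:ℕ))) =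
      insert m (univ.filter (fun j : Fin N => (m:ℕ) + 1 ≤ (j:ℕ))) := by
    ext j
    simp only [mem_filter, mem_univ, true_and, mem_insert]
    constructor
    · intro hj
      rcases Nat.eq_or_lt_of_le hj with h | h
      · left; exact (Fin.ext h.symm : j = m)
      · right; exact h
    · rintro (rfl | hj)
      · exact le_refl _
      · exact Nat.le_of_succ_le hj
  have hmem : m ∉ univ.filter (fun j : Fin N => (m:ℕ) + 1 ≤ (j:ℕ)) := by simp
  have hpm : p m x = p m u := hp.2.2 m x u (fun i hi => by
    have h := hx i (Nat.lt_succ_of_lt hi)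
    rwa [Function.update_of_ne (fun h' => absurd (congrArg Fin.val h') (Nat.ne_of_lt hi))] at h)
  rw [hprod, Finset.prod_insert hmem, hpm, hxm]
  ring

lemma weighted_diff_le (μ ν : A → ℝ) (hμ : ∑ a, μ a = 1) (hν : ∑ a, ν a = 1)
    (g : A → ℝ) :
    |∑ b, (μ b - ν b) * g b| ≤
      dTV μ ν * (univ.sup' univ_nonempty g - univ.inf' univ_nonempty g) := by
  set M := univ.sup' univ_nonempty g
  set m := univ.inf' univ_nonempty g
  set t := (M + m) / 2
  have hz : ∑ b, (μ b - ν b) = 0 := by rw [Finset.sum_sub_distrib, hμ, hν]; ring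
  have key : ∑ b, (μ b - ν b) * g b = ∑ b, (μ b - ν b) * (g b - t) := by
    have h2 : ∑ b, (μ b - ν b) * (g b - t) =
        ∑ b, (μ b - ν b) * g b - (∑ b, (μ b - ν b)) * t := by
      rw [Finset.sum_mul, ← Finset.sum_sub_distrib]
      exact Finset.sum_congr rfl fun b _ => by ring
    rw [h2, hz]; ring
  rw [key]
  calc |∑ b, (μ b - ν b) * (g b - t)| ≤ ∑ b, |(μ b - ν b) * (g b - t)| :=
        Finset.abs_sum_le_sum_abs _ _
    _ ≤ ∑ b, |μ b - ν b| * ((M - m) / 2) := by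
        refine Finset.sum_le_sum fun b _ => ?_
        rw [abs_mul]
        refine mul_le_mul_of_nonneg_left ?_ (abs_nonneg _)
        rw [abs_le]
        have h1 : g b ≤ M := Finset.le_sup' g (mem_univ b)
        have h2 : m ≤ g b := Finset.inf'_le g (mem_univ b)
        constructor <;> · simp only [t]; nlinarith
    _ = dTV μ ν * (M - m) := by
        rw [← Finset.sum_mul]; unfold dTV; ring

lemma resolvent_eq (p : Fin N → (Fin N → A) → A → ℝ) :
    causalResolvent (Hmat p) = 1 + Hmat p * causalResolvent (Hmat p) := by
  have hdet : (1 - Hmat p).det = 1 := by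
    have htri : Matrix.BlockTriangular (1 - Hmat p) id := by
      intro i j hji
      simp only [Matrix.sub_apply, Matrix.one_apply, Hmat]
      have hji' : j < i := hji
      rw [if_neg (ne_of_gt hji'), if_neg (fun h => absurd (lt_trans hji' h) (lt_irrefl j))]
      ring
    rw [Matrix.det_of_upperTriangular htri]
    apply Finset.prod_eq_one
    intro i _
    simp [Matrix.sub_apply, Matrix.one_apply, Hmat]
  have hinv : (1 - Hmat p) * causalResolvent (Hmat p) = 1 :=
    Matrix.mul_nonsing_inv _ (by rw [hdet]; exact isUnit_one)
  have := hinv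
  rw [sub_mul, one_mul, sub_eq_iff_eq_add] at this
  exact this

lemma mulVec_resolvent (p : Fin N → (Fin N → A) → A → ℝ) (c : Fin N → ℝ) (k : Fin N) :
    (causalResolvent (Hmat p)).mulVec c k =
      c k + ∑ j, Hmat p k j * (causalResolvent (Hmat p)).mulVec c j := by
  conv_lhs => rw [resolvent_eq p]
  rw [Matrix.add_mulVec, Matrix.one_mulVec, ← Matrix.mulVec_mulVec]
  rfl

lemma sum_trunc (p : Fin N → (Fin N → A) → A → ℝ) (M : Fin N) (g : Fin N → ℝ) :
    ∑ j, Hmat p M j * g j =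
      ∑ j ∈ univ.filter (fun j : Fin N => (M : ℕ) + 1 ≤ (j : ℕ)), Hmat p M j * g j := by
  symm
  apply Finset.sum_subset (Finset.filter_subset _ _)
  intro j _ hj
  simp only [mem_filter, mem_univ, true_and, not_le] at hj
  have : ¬ M < j := by
    intro h; exact absurd (Nat.lt_of_lt_of_le h (Nat.le_of_lt_succ hj)) (lt_irrefl _)
  unfold Hmat
  rw [if_neg this, zero_mul]

lemma key_lemma {p : Fin N → (Fin N → A) → A → ℝ} (hp : IsCausalKernel p)
    {f : (Fin N → A) → ℝ} {c : Fin N → ℝ} (hf : HasSensitivity f c) :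
    ∀ d m, m + d = N → ∀ i : Fin N, (i : ℕ) < m → ∀ u u' : Fin N → A,
      (∀ l, l ≠ i → u l = u' l) →
      |condExpF p f m u - condExpF p f m u'| ≤
        c i + ∑ j ∈ univ.filter (fun j : Fin N => m ≤ (j : ℕ)),
          Hmat p i j * (causalResolvent (Hmat p)).mulVec c j := by
  intro d
  induction d with
  | zero =>
      intro m hm i hi u u' h
      have hm' : m = N := by omega
      rw [hm']
      rw [condExpF_at_N, condExpF_at_N]
      have hfil : (univ.filter (fun j : Fin N => N ≤ (j : ℕ))) = ∅ := by
        ext j; simp [Nat.not_le.2 j.isLt]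
      rw [hfil, Finset.sum_empty, add_zero]
      refine le_trans (hf.2 u u') ?_
      calc ∑ j, (if u j ≠ u' j then c j else 0) ≤ ∑ j, (if j = i then c i else 0) := by
            refine Finset.sum_le_sum fun j _ => ?_
            by_cases hji : j = i
            · subst hji
              by_cases hne : u j ≠ u' j <;> simp [hne, hf.1 j]
            · simp [h j hji, hji]
        _ = c i := by simp
  | succ d ih =>
      intro m hm i hi u u' h
      have hmN : m < N := by omega
      set M : Fin N := ⟨m, hmN⟩ with hM
      have hiM : i < M := hi
      -- recursion
      have hu : condExpF p f m u = ∑ b, p M u b * condExpF p f (m + 1) (Function.update u M b) :=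
        condExpF_succ hp f M u
      have hu' : condExpF p f m u' = ∑ b, p M u' b * condExpF p f (m + 1) (Function.update u' M b) :=
        condExpF_succ hp f M u'
      set G := fun b => condExpF p f (m + 1) (Function.update u M b) with hG
      set G' := fun b => condExpF p f (m + 1) (Function.update u' M b) with hG'
      set Γc := (causalResolvent (Hmat p)).mulVec c with hΓc
      set B1 := c i + ∑ j ∈ univ.filter (fun j : Fin N => m + 1 ≤ (j : ℕ)), Hmat p i j * Γc j with hB1
      -- IH applications
      have hIH1 : ∀ b, |G b - G' b| ≤ B1 := by
        intro b
        apply ih (m + 1) (by omega) i (by omega)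
        intro l hl
        rcases eq_or_ne l M with rfl | hlM
        · simp
        · rw [Function.update_of_ne hlM, Function.update_of_ne hlM]
          exact h l hl
      have hIH2 : ∀ b b', |G' b - G' b'| ≤ Γc M := by
        intro b b'
        have h2 := ih (m + 1) (by omega) M (by simpa [hM] using Nat.lt_succ_self m) (Function.update u' M b)
          (Function.update u' M b') (by
            intro l hl
            rw [Function.update_of_ne hl, Function.update_of_ne hl])
        have heq : c M + ∑ j ∈ univ.filter (fun j : Fin N => m + 1 ≤ (j : ℕ)),
            Hmat p M j * Γc j = Γc M := by
          rw [hΓc, mulVec_resolvent, sum_trunc p M]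
        rw [hΓc] at heq ⊢
        exact le_of_le_of_eq h2 heq
      -- decomposition
      have hsplit : condExpF p f m u - condExpF p f m u' =
          (∑ b, p M u b * (G b - G' b)) + (∑ b, (p M u b - p M u' b) * G' b) := by
        rw [hu, hu', ← Finset.sum_sub_distrib, ← Finset.sum_add_distrib]
        exact Finset.sum_congr rfl fun b _ => by ring
      rw [hsplit]
      have hb1 : |∑ b, p M u b * (G b - G' b)| ≤ B1 := by
        calc |∑ b, p M u b * (G b - G' b)| ≤ ∑ b, |p M u b * (G b - G' b)| :=
              Finset.abs_sum_le_sum_abs _ _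
          _ ≤ ∑ b, p M u b * B1 := by
              refine Finset.sum_le_sum fun b _ => ?_
              rw [abs_mul, abs_of_nonneg (hp.1 M u b)]
              exact mul_le_mul_of_nonneg_left (hIH1 b) (hp.1 M u b)
          _ = B1 := by rw [← Finset.sum_mul, hp.2.1 M u, one_mul]
      have hb2 : |∑ b, (p M u b - p M u' b) * G' b| ≤ Hmat p i M * Γc M := by
        have hW := weighted_diff_le (p M u) (p M u') (hp.2.1 M u) (hp.2.1 M u') G'
        have hdtv : dTV (p M u) (p M u') ≤ Hmat p i M := dTV_le_Hmat hp hiM u u' h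
        obtain ⟨bmax, _, hbmax⟩ := Finset.exists_mem_eq_sup' univ_nonempty G'
        obtain ⟨bmin, _, hbmin⟩ := Finset.exists_mem_eq_inf' univ_nonempty G'
        have hosc : univ.sup' univ_nonempty G' - univ.inf' univ_nonempty G' ≤ Γc M := by
          rw [hbmax, hbmin]
          exact le_trans (le_abs_self _) (hIH2 bmax bmin)
        have hosc0 : 0 ≤ univ.sup' univ_nonempty G' - univ.inf' univ_nonempty G' := by
          have b0 := Classical.arbitrary A
          have h1 := Finset.inf'_le G' (mem_univ b0)
          have h2 := Finset.le_sup' G' (mem_univ b0)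
          linarith
        calc |∑ b, (p M u b - p M u' b) * G' b|
            ≤ dTV (p M u) (p M u') * (univ.sup' univ_nonempty G' - univ.inf' univ_nonempty G') := hW
          _ ≤ Hmat p i M * Γc M :=
              mul_le_mul hdtv hosc hosc0 (Hmat_nonneg hp i M)
      have hins : (univ.filter (fun j : Fin N => m ≤ (j : ℕ))) =
          insert M (univ.filter (fun j : Fin N => m + 1 ≤ (j : ℕ))) := by
        ext j
        simp only [mem_filter, mem_univ, true_and, mem_insert]
        constructor
        · intro hj
          rcases Nat.eq_or_lt_of_le hj with h' | h'
          · left; exact Fin.ext h'.symm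
          · right; exact h'
        · rintro (rfl | hj)
          · exact le_refl _
          · exact Nat.le_of_succ_le hj
      have hfin : B1 + Hmat p i M * Γc M = c i +
          ∑ j ∈ univ.filter (fun j : Fin N => m ≤ (j : ℕ)), Hmat p i j * Γc j := by
        rw [hins, Finset.sum_insert (by simp [hM])]
        rw [hB1]; ring
      calc |(∑ b, p M u b * (G b - G' b)) + (∑ b, (p M u b - p M u' b) * G' b)|
          ≤ |∑ b, p M u b * (G b - G' b)| + |∑ b, (p M u b - p M u' b) * G' b| := abs_add_le _ _
        _ ≤ B1 + Hmat p i M * Γc M := add_le_add hb1 hb2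
        _ = _ := hfin

end Aux

/-- **Martingale oscillation bound** (proof of Theorem 3.1): for every prefix `z` and any two
values `a, a'` placed at coordinate `k`, the conditional expectations differ by at most the
`k`-th entry of `Γc`. -/
theorem condExpF_oscillation_le
    {N : ℕ} (hN : 1 ≤ N) {A : Type*} [Fintype A] [Nonempty A] [DecidableEq A]
    (p : Fin N → (Fin N → A) → A → ℝ) (hp : IsCausalKernel p)
    (f : (Fin N → A) → ℝ) (c : Fin N → ℝ) (hf : HasSensitivity f c)
    (k : Fin N) (z : Fin N → A) (a a' : A) :
    |condExpF p f ((k : ℕ) + 1) (Function.update z k a) -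
        condExpF p f ((k : ℕ) + 1) (Function.update z k a')| ≤
      (causalResolvent (Hmat p)).mulVec c k := by
  have hkey := key_lemma hp hf (N - ((k : ℕ) + 1)) ((k : ℕ) + 1) (by omega) k
    (Nat.lt_succ_self _) (Function.update z k a) (Function.update z k a')
    (fun l hl => by rw [Function.update_of_ne hl, Function.update_of_ne hl])
  refine le_trans hkey (le_of_eq ?_)
  rw [mulVec_resolvent, sum_trunc p k]
end
end
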